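/- arXiv:1811.04493 — 13 statements merged into one kernel-verified Lean document; each statement's English description precedes it below -/
import Mathlib

section
/- Let N ≥ 2, let L be an N×N real symmetric matrix whose kernel is exactly the span of the all-ones vector 1_N (as holds for the graph Laplacian of a connected weighted undirected graph), and let M be an N×N real matrix satisfying the four Penrose equations for L (L·M·L = L, M·L·M = M, (L·M)ᵀ = L·M, (M·L)ᵀ = M·L). Then for every subset Λ of the index set {0,…,N−1}, a vector x ∈ ℝ^N satisfies (L·x)_i = 0 for all i ∈ Λ if and only if x = z·1_N + M·v for some z ∈ ℝ and some v ∈ ℝ^N with v_i = 0 for all i ∈ Λ and ∑_{i=0}^{N−1} v_i = 0. -/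
open Matrix

/-- For the graph Laplacian `L` of a connected graph (symmetric with kernel exactly the
span of the all-ones vector) and `M` its Moore–Penrose pseudoinverse (given by the four
Penrose equations), a vector `x` is annihilated by the rows of `L` indexed by `Λ` iff
`x = z·1 + M·v` for some scalar `z` and some `v` supported off `Λ` with zero sum. -/
theorem analysis_subspace_of_connected_laplacian
    (N : ℕ) (hN : 2 ≤ N)
    (L M : Matrix (Fin N) (Fin N) ℝ)
    (hLsymm : L.IsSymm)
    (hker : ∀ x : Fin N → ℝ, L.mulVec x = 0 ↔ ∃ z : ℝ, x = fun _ => z)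
    (hP1 : L * M * L = L) (hP2 : M * L * M = M)
    (hP3 : (L * M)ᵀ = L * M) (hP4 : (M * L)ᵀ = M * L) :
    ∀ (Λ : Finset (Fin N)) (x : Fin N → ℝ),
      (∀ i ∈ Λ, L.mulVec x i = 0) ↔
        ∃ (z : ℝ) (v : Fin N → ℝ),
          (∀ i ∈ Λ, v i = 0) ∧ (∑ i, v i = 0) ∧
          x = (fun _ => z) + M.mulVec v := by
  intro Λ x
  -- L annihilates constant vectors
  have hL1 : L.mulVec (fun _ => (1:ℝ)) = 0 := (hker _).mpr ⟨1, rfl⟩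
  -- every vector in the range of L has zero sum
  have hsum : ∀ y : Fin N → ℝ, ∑ i, L.mulVec y i = 0 := by
    intro y
    have h1 : ∑ i, L.mulVec y i = (fun _ => (1:ℝ)) ⬝ᵥ L.mulVec y := by
      simp [dotProduct]
    rw [h1, Matrix.dotProduct_mulVec, ← Matrix.mulVec_transpose, hLsymm.eq, hL1]
    simp
  -- L * (L * M) = L
  have hLLM : L * (L * M) = L := by
    have h0 : (1 - L * M) * L = 0 := by
      rw [sub_mul, one_mul, hP1, sub_self]
    have ht := congrArg Matrix.transpose h0
    rw [Matrix.transpose_mul, Matrix.transpose_zero, hLsymm.eq, Matrix.transpose_sub,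
      Matrix.transpose_one, hP3, Matrix.mul_sub, Matrix.mul_one, sub_eq_zero] at ht
    exact ht.symm
  -- L * M acts as the identity on zero-sum vectors
  have hLM : ∀ v : Fin N → ℝ, (∑ i, v i = 0) → L.mulVec (M.mulVec v) = v := by
    intro v hv
    set w : Fin N → ℝ := L.mulVec (M.mulVec v) - v with hw
    have hLw : L.mulVec w = 0 := by
      show L.mulVec (L.mulVec (M.mulVec v) - v) = 0
      rw [Matrix.mulVec_sub, Matrix.mulVec_mulVec, Matrix.mulVec_mulVec, Matrix.mul_assoc,
        hLLM, sub_self]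
    obtain ⟨c, hc⟩ := (hker w).mp hLw
    have hsw : ∑ i, w i = 0 := by
      have h2 : ∑ i, w i = (∑ i, L.mulVec (M.mulVec v) i) - ∑ i, v i := by
        rw [hw]; simp [Finset.sum_sub_distrib]
      rw [h2, hsum (M.mulVec v), hv, sub_zero]
    rw [hc] at hsw
    simp [Finset.sum_const] at hsw
    have hc0 : c = 0 := by
      rcases hsw with h | h
      · omega
      · exact h
    have : w = 0 := by rw [hc, hc0]; ext i; rfl
    have := sub_eq_zero.mp this
    exact this
  constructor
  · intro hx
    refine ⟨?_, L.mulVec x, hx, hsum x, ?_⟩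
    · -- the constant z : x - M (L x) is constant
      exact Classical.choose ((hker (x - M.mulVec (L.mulVec x))).mp (by
        rw [Matrix.mulVec_sub, Matrix.mulVec_mulVec, Matrix.mulVec_mulVec, Matrix.mul_assoc,
          ← Matrix.mul_assoc] at *
        rw [hP1, sub_self]))
    · have hz := Classical.choose_spec ((hker (x - M.mulVec (L.mulVec x))).mp (by
        rw [Matrix.mulVec_sub, Matrix.mulVec_mulVec, Matrix.mulVec_mulVec, Matrix.mul_assoc,
          ← Matrix.mul_assoc] at *
        rw [hP1, sub_self]))
      rw [← hz]
      ext i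
      simp
  · rintro ⟨z, v, hvΛ, hvs, rfl⟩
    intro i hi
    have hconst : L.mulVec (fun _ => z) = 0 := (hker _).mpr ⟨z, rfl⟩
    rw [Matrix.mulVec_add, hconst, hLM v hvs]
    simp [hvΛ i hi]
end

section
/- Let N ≥ 2 and let L be an N×N real symmetric matrix whose kernel is exactly the span of the all-ones vector 1_N. Then for every proper subset Λ ⊊ {0,…,N−1}, the rows of L indexed by Λ are linearly independent; equivalently, the space {x ∈ ℝ^N : (L·x)_i = 0 for all i ∈ Λ} has dimension exactly N − |Λ|. -/
open Matrix

/-!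
A vanishing combination `∑_{i ∈ Λ} c i • L i` of rows of `L` says `c ᵥ* L = 0`, i.e. `L *ᵥ c = 0`
by symmetry, so `c` is constant; since `c` vanishes off `Λ ≠ univ`, it is zero. The dimension
count is then rank–nullity for the row-sampled matrix.
-/

namespace Matrix

variable {R K m n : Type*}

theorem linearIndepOn_row_of_vecMul_eq_zero [CommRing R] [Fintype m] {A : Matrix m n R}
    {s : Set m} (hA : ∀ c : m → R, (∀ i ∉ s, c i = 0) → c ᵥ* A = 0 → c = 0) :
    LinearIndepOn R A.row s := by
  rw [linearIndepOn_iff]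
  intro l hl hcomb
  have hvecMul : ⇑l ᵥ* A = 0 := by
    rw [vecMul_eq_sum, ← hcomb, Finsupp.linearCombination_apply, Finsupp.sum_fintype _ _
      fun i => zero_smul R (A.row i), row]
  exact DFunLike.coe_injective (hA l (fun i hi => (Finsupp.mem_supported' R l).1 hl i hi) hvecMul)

theorem linearIndepOn_row_of_vecMul_eq_zero_const [CommRing R] [Fintype m] {A : Matrix m n R}
    (hA : ∀ c : m → R, c ᵥ* A = 0 → ∃ z : R, c = fun _ => z) {s : Set m} {j : m} (hj : j ∉ s) :
    LinearIndepOn R A.row s := by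
  refine linearIndepOn_row_of_vecMul_eq_zero fun c hc hvecMul => ?_
  obtain ⟨z, rfl⟩ := hA c hvecMul
  obtain rfl : z = 0 := hc j hj
  rfl

theorem iInf_ker_proj_comp_mulVecLin [CommSemiring R] [Fintype n] (A : Matrix m n R)
    (s : Finset m) :
    ⨅ i ∈ s, LinearMap.ker ((LinearMap.proj i : (m → R) →ₗ[R] R) ∘ₗ A.mulVecLin) =
      LinearMap.ker (A.submatrix ((↑) : s → m) id).mulVecLin := by
  ext x
  simp only [Submodule.mem_iInf, LinearMap.mem_ker, LinearMap.coe_comp, Function.comp_apply,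
    LinearMap.proj_apply, mulVecLin_apply, funext_iff, Subtype.forall, Pi.zero_apply]
  rfl

theorem finrank_iInf_ker_proj_comp_mulVecLin [Field K] [Fintype n] (A : Matrix m n K)
    (s : Finset m) (hs : LinearIndepOn K A.row (s : Set m)) :
    Module.finrank K
      ↥(⨅ i ∈ s, LinearMap.ker ((LinearMap.proj i : (m → K) →ₗ[K] K) ∘ₗ A.mulVecLin)) =
      Fintype.card n - s.card := by
  rw [iInf_ker_proj_comp_mulVecLin]
  set B := A.submatrix ((↑) : s → m) id
  have hrank : B.rank = s.card :=
    (LinearIndependent.rank_matrix (M := B) hs).trans (Fintype.card_coe s)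
  have hrankNullity := LinearMap.finrank_range_add_finrank_ker B.mulVecLin
  rw [Module.finrank_fintype_fun_eq_card] at hrankNullity
  change B.rank + _ = _ at hrankNullity
  omega

end Matrix

theorem sampled_laplacian_full_row_rank_general
    (N : ℕ)
    (L : Matrix (Fin N) (Fin N) ℝ)
    (hLsymm : L.IsSymm)
    (hker : ∀ x : Fin N → ℝ, L.mulVec x = 0 ↔ ∃ z : ℝ, x = fun _ => z)
    (Λ : Finset (Fin N)) (hΛ : Λ ≠ Finset.univ) :
    LinearIndependent ℝ (fun i : Λ => L i.1) ∧
    Module.finrank ℝ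
      ↥(⨅ i ∈ Λ, LinearMap.ker
          ((LinearMap.proj i : (Fin N → ℝ) →ₗ[ℝ] ℝ) ∘ₗ L.mulVecLin)) = N - Λ.card := by
  obtain ⟨j, hj⟩ := (Set.ne_univ_iff_exists_notMem _).1 (Finset.coe_eq_univ.not.2 hΛ)
  have hleftKer : ∀ c : Fin N → ℝ, c ᵥ* L = 0 → ∃ z : ℝ, c = fun _ => z := fun c hc =>
    (hker c).1 (by rwa [← hLsymm.eq, mulVec_transpose])
  have hrows : LinearIndepOn ℝ L.row (Λ : Set (Fin N)) :=
    linearIndepOn_row_of_vecMul_eq_zero_const hleftKer hj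
  refine ⟨hrows, ?_⟩
  simpa only [Fintype.card_fin] using finrank_iInf_ker_proj_comp_mulVecLin L Λ hrows

/-- For the graph Laplacian `L` of a connected graph (symmetric with kernel exactly the
span of the all-ones vector) and a proper subset `Λ` of indices, the rows of `L` indexed
by `Λ` are linearly independent; equivalently, the cosparse analysis subspace
`{x : (L x)_i = 0 for i ∈ Λ}` has dimension exactly `N - |Λ|`. -/
theorem sampled_laplacian_full_row_rank
    (N : ℕ) (hN : 2 ≤ N)
    (L : Matrix (Fin N) (Fin N) ℝ)
    (hLsymm : L.IsSymm)
    (hker : ∀ x : Fin N → ℝ, L.mulVec x = 0 ↔ ∃ z : ℝ, x = fun _ => z)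
    (Λ : Finset (Fin N)) (hΛ : Λ ≠ Finset.univ) :
    LinearIndependent ℝ (fun i : Λ => L i.1) ∧
    Module.finrank ℝ
      ↥(⨅ i ∈ Λ, LinearMap.ker
          ((LinearMap.proj i : (Fin N → ℝ) →ₗ[ℝ] ℝ) ∘ₗ L.mulVecLin)) = N - Λ.card :=
  sampled_laplacian_full_row_rank_general N L hLsymm hker Λ hΛ
end

section
/- Let N ≥ 3 and let L_C be the N×N simple-cycle graph Laplacian, i.e. the symmetric circulant matrix with (L_C)_{ii} = 2, (L_C)_{ij} = −1 when j − i ≡ ±1 (mod N), and 0 otherwise. Define M ∈ ℝ^{N×N} by M_{ij} = (N²−1)/(12N) − |j−i|/2 + (j−i)²/(2N) for 0 ≤ i,j ≤ N−1 (with |j−i| the ordinary absolute value of integers). Then M satisfies the four Penrose equations for L_C, i.e. M is the Moore–Penrose pseudoinverse of L_C; in particular L_C·M = M·L_C = I_N − (1/N)·J_N and M·J_N = J_N·M = 0. -/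
open Matrix

noncomputable def ff (n : ℕ) (x : ℝ) : ℝ := -(|x| / 2) + x ^ 2 / (2 * n)

lemma ff_per (n : ℕ) (hn : 0 < n) (x : ℝ) (h0 : 0 ≤ x) (h1 : x ≤ n) :
    ff n (x - n) = ff n x := by
  have hn' : (n : ℝ) ≠ 0 := by positivity
  unfold ff
  rw [abs_of_nonneg h0, abs_of_nonpos (by linarith)]
  field_simp
  ring

lemma ff_diff (n : ℕ) (hn : 0 < n) (x : ℝ) (hx : 1 ≤ |x|) :
    2 * ff n x - ff n (x - 1) - ff n (x + 1) = -(1 / n) := by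
  have hn' : (n : ℝ) ≠ 0 := by positivity
  unfold ff
  rcases abs_cases x with ⟨h1, h2⟩ | ⟨h1, h2⟩
  · rw [h1, abs_of_nonneg (by linarith : (0:ℝ) ≤ x - 1),
      abs_of_nonneg (by linarith : (0:ℝ) ≤ x + 1)]
    field_simp
    ring
  · rw [h1, abs_of_nonpos (by linarith : x - 1 ≤ 0),
      abs_of_nonpos (by linarith : x + 1 ≤ 0)]
    field_simp
    ring

lemma ff_diff0 (n : ℕ) (hn : 0 < n) :
    2 * ff n 0 - ff n (-1) - ff n 1 = 1 - 1 / n := by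
  have hn' : (n : ℝ) ≠ 0 := by positivity
  unfold ff
  simp only [abs_zero, abs_neg, abs_one]
  field_simp
  ring

lemma sum_sq_range (n : ℕ) : ∑ k ∈ Finset.range n, (k : ℝ) ^ 2
    = n * (n - 1) * (2 * n - 1) / 6 := by
  induction n with
  | zero => simp
  | succ m ih => rw [Finset.sum_range_succ, ih]; push_cast; ring

lemma sum_id_range (n : ℕ) : ∑ k ∈ Finset.range n, (k : ℝ)
    = n * (n - 1) / 2 := by
  induction n with
  | zero => simp
  | succ m ih => rw [Finset.sum_range_succ, ih]; push_cast; ring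

lemma ff_sum (n : ℕ) (hn : 0 < n) :
    ∑ k ∈ Finset.range n, ff n (k : ℝ) = -(((n : ℝ) ^ 2 - 1) / 12) := by
  have hn' : (n : ℝ) ≠ 0 := by positivity
  have h : ∀ k ∈ Finset.range n, ff n (k : ℝ) = -((k:ℝ)/2) + (k:ℝ)^2 / (2*n) := by
    intro k _
    unfold ff
    rw [Nat.abs_cast]
  rw [Finset.sum_congr rfl h, Finset.sum_add_distrib, Finset.sum_neg_distrib,
    ← Finset.sum_div, ← Finset.sum_div, sum_id_range, sum_sq_range]
  field_simp
  ring

def pnext (N : ℕ) (h : 0 < N) (i : Fin N) : Fin N := ⟨(i.val + 1) % N, Nat.mod_lt _ h⟩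
def mprev (N : ℕ) (h : 0 < N) (i : Fin N) : Fin N := ⟨(i.val + (N - 1)) % N, Nat.mod_lt _ h⟩

lemma pnext_val (N : ℕ) (h : 0 < N) (i : Fin N) :
    (pnext N h i).val = if i.val = N - 1 then 0 else i.val + 1 := by
  show (i.val + 1) % N = _
  split_ifs with hh
  · rw [hh, Nat.sub_add_cancel (by omega), Nat.mod_self]
  · exact Nat.mod_eq_of_lt (by have := i.isLt; omega)

lemma mprev_val (N : ℕ) (h : 0 < N) (i : Fin N) :
    (mprev N h i).val = if i.val = 0 then N - 1 else i.val - 1 := by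
  show (i.val + (N - 1)) % N = _
  split_ifs with hh
  · rw [hh, Nat.zero_add]
    exact Nat.mod_eq_of_lt (by omega)
  · have e : i.val + (N - 1) = (i.val - 1) + N := by omega
    rw [e, Nat.add_mod_right]
    exact Nat.mod_eq_of_lt (by have := i.isLt; omega)

lemma mod_succ_eq (N : ℕ) (h : 0 < N) (k : ℕ) (hk : k < N) :
    (k + 1) % N = if k = N - 1 then 0 else k + 1 := by
  split_ifs with hh
  · rw [hh, Nat.sub_add_cancel (by omega), Nat.mod_self]
  · exact Nat.mod_eq_of_lt (by omega)

/-- The matrix with entries `(N²-1)/(12N) - |j-i|/2 + (j-i)²/(2N)` is the Moore–Penrose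
pseudoinverse of the simple-cycle graph Laplacian `L_C` (circulant with diagonal `2` and
entries `-1` at offsets `±1 (mod N)`): it satisfies the four Penrose equations, and in
particular `L_C·M = M·L_C = I - (1/N)·J` and `M·J = J·M = 0`. -/
theorem cycle_laplacian_pseudoinverse_formula
    (N : ℕ) (hN : 3 ≤ N)
    (L M : Matrix (Fin N) (Fin N) ℝ)
    (hL : ∀ i j, L i j =
      if i = j then 2
      else if j.val = (i.val + 1) % N ∨ i.val = (j.val + 1) % N then -1 else 0)
    (hM : ∀ i j, M i j =
      ((N : ℝ) ^ 2 - 1) / (12 * N) - |(j.val : ℝ) - (i.val : ℝ)| / 2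
        + ((j.val : ℝ) - (i.val : ℝ)) ^ 2 / (2 * N)) :
    L * M * L = L ∧ M * L * M = M ∧ (L * M)ᵀ = L * M ∧ (M * L)ᵀ = M * L ∧
    L * M = 1 - ((N : ℝ))⁻¹ • Matrix.of (fun _ _ => (1 : ℝ)) ∧
    M * L = 1 - ((N : ℝ))⁻¹ • Matrix.of (fun _ _ => (1 : ℝ)) ∧
    M * Matrix.of (fun _ _ => (1 : ℝ)) = 0 ∧
    Matrix.of (fun _ _ => (1 : ℝ)) * M = 0 := by
  have hN0 : 0 < N := by omega
  haveI : NeZero N := ⟨by omega⟩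
  have hNR : (N : ℝ) ≠ 0 := by positivity
  set c : ℝ := ((N : ℝ) ^ 2 - 1) / (12 * N) with hc
  set p : Fin N → Fin N := pnext N hN0 with hpdef
  set m : Fin N → Fin N := mprev N hN0 with hmdef
  have hM' : ∀ i j : Fin N, M i j = c + ff N ((j.val : ℝ) - i.val) := by
    intro i j
    rw [hM]
    unfold ff
    ring
  -- bounds on Fin values as reals
  have hub : ∀ i : Fin N, (i.val : ℝ) ≤ (N : ℝ) - 1 := by
    intro i
    have h1 : i.val + 1 ≤ N := i.isLt
    have h2 : (i.val : ℝ) + 1 ≤ N := by exact_mod_cast h1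
    linarith
  -- distinctness
  have hpi : ∀ i, p i ≠ i := by
    intro i h
    have h2 := congrArg Fin.val h
    rw [hpdef, pnext_val] at h2
    have := i.isLt
    split_ifs at h2 <;> omega
  have hmi : ∀ i, m i ≠ i := by
    intro i h
    have h2 := congrArg Fin.val h
    rw [hmdef, mprev_val] at h2
    have := i.isLt
    split_ifs at h2 <;> omega
  have hpm : ∀ i, p i ≠ m i := by
    intro i h
    have h2 := congrArg Fin.val h
    rw [hpdef, hmdef, pnext_val, mprev_val] at h2
    have := i.isLt
    split_ifs at h2 <;> omega
  -- characterizations of conditions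
  have e1 : ∀ i k : Fin N, k = p i ↔ k.val = (i.val + 1) % N := by
    intro i k
    rw [Fin.ext_iff]
    rfl
  have e2 : ∀ i k : Fin N, k = m i ↔ i.val = (k.val + 1) % N := by
    intro i k
    rw [Fin.ext_iff, hmdef, mprev_val, mod_succ_eq N hN0 k.val k.isLt]
    have := i.isLt
    have := k.isLt
    split_ifs <;> omega
  -- L in terms of p and m
  have hL' : ∀ i k, L i k = (if k = i then (2:ℝ) else 0) + (if k = p i then -1 else 0)
      + (if k = m i then -1 else 0) := by
    intro i k
    rw [hL]
    rcases eq_or_ne k i with h1 | h1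
    · subst h1
      rw [if_pos rfl, if_pos rfl, if_neg (Ne.symm (hpi k)), if_neg (Ne.symm (hmi k))]
      norm_num
    · rcases eq_or_ne k (p i) with h2 | h2
      · subst h2
        rw [if_neg (fun h => h1 h.symm), if_pos (Or.inl ((e1 i (p i)).mp rfl)),
          if_neg h1, if_pos rfl, if_neg (hpm i)]
        norm_num
      · rcases eq_or_ne k (m i) with h3 | h3
        · subst h3
          rw [if_neg (fun h => h1 h.symm), if_pos (Or.inr ((e2 i (m i)).mp rfl)),
            if_neg h1, if_neg h2, if_pos rfl]
          norm_num
        · rw [if_neg (fun h => h1 h.symm), if_neg, if_neg h1, if_neg h2, if_neg h3]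
          · norm_num
          · rintro (h | h)
            · exact h2 ((e1 i k).mpr h)
            · exact h3 ((e2 i k).mpr h)
  -- shifted rows of M
  have hp' : ∀ i j : Fin N, M (p i) j = c + ff N ((j.val : ℝ) - i.val - 1) := by
    intro i j
    rw [hM']
    congr 1
    rcases eq_or_ne i.val (N - 1) with h | h
    · have hv : ((p i).val : ℝ) = 0 := by
        rw [hpdef, pnext_val, if_pos h]
        norm_num
      have hi : (i.val : ℝ) = (N : ℝ) - 1 := by
        rw [h]
        push_cast [Nat.cast_sub (by omega : 1 ≤ N)]
        ring
      rw [hv]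
      have harg : (j.val : ℝ) - (i.val : ℝ) - 1 = (j.val : ℝ) - N := by rw [hi]; ring
      rw [harg, ff_per N hN0 (j.val : ℝ) (by positivity) (by have := hub j; linarith)]
      norm_num
    · have hv : ((p i).val : ℝ) = (i.val : ℝ) + 1 := by
        rw [hpdef, pnext_val, if_neg h]
        push_cast
        ring
      rw [hv]
      congr 1
      ring
  have hm' : ∀ i j : Fin N, M (m i) j = c + ff N ((j.val : ℝ) - i.val + 1) := by
    intro i j
    rw [hM']
    congr 1
    rcases eq_or_ne i.val 0 with h | h
    · have hv : ((m i).val : ℝ) = (N : ℝ) - 1 := by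
        rw [hmdef, mprev_val, if_pos h]
        push_cast [Nat.cast_sub (by omega : 1 ≤ N)]
        ring
      have hi : (i.val : ℝ) = 0 := by rw [h]; norm_num
      rw [hv, hi]
      have harg : (j.val : ℝ) - ((N : ℝ) - 1) = ((j.val : ℝ) + 1) - N := by ring
      rw [harg, ff_per N hN0 ((j.val : ℝ) + 1) (by positivity) (by have := hub j; linarith)]
      norm_num
    · have hv : ((m i).val : ℝ) = (i.val : ℝ) - 1 := by
        rw [hmdef, mprev_val, if_neg h]
        push_cast [Nat.cast_sub (by omega : 1 ≤ i.val)]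
        ring
      rw [hv]
      congr 1
      ring
  -- the key entrywise computation
  have key : ∀ i j, (L * M) i j = (if i = j then (1:ℝ) else 0) - 1 / N := by
    intro i j
    rw [Matrix.mul_apply]
    simp only [hL', add_mul, ite_mul, zero_mul]
    rw [Finset.sum_add_distrib, Finset.sum_add_distrib,
      Finset.sum_ite_eq' Finset.univ i (fun k => (2:ℝ) * M k j),
      Finset.sum_ite_eq' Finset.univ (p i) (fun k => (-1:ℝ) * M k j),
      Finset.sum_ite_eq' Finset.univ (m i) (fun k => (-1:ℝ) * M k j)]
    simp only [Finset.mem_univ, if_true]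
    rw [hM' i j, hp' i j, hm' i j]
    rcases eq_or_ne i j with h | h
    · subst h
      rw [if_pos rfl]
      rw [show ((i.val:ℝ) - i.val - 1) = -1 by ring,
        show ((i.val:ℝ) - i.val + 1) = 1 by ring,
        show ((i.val:ℝ) - i.val) = 0 by ring]
      have := ff_diff0 N hN0
      linarith
    · rw [if_neg h]
      have hne : j.val ≠ i.val := fun hh => h (Fin.ext hh).symm
      have habs : 1 ≤ |(j.val:ℝ) - i.val| := by
        rcases Nat.lt_or_ge j.val i.val with hlt | hge
        · refine le_abs.mpr (Or.inr ?_)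
          have : (j.val:ℝ) + 1 ≤ i.val := by exact_mod_cast hlt
          linarith
        · have hlt : i.val < j.val := by omega
          refine le_abs.mpr (Or.inl ?_)
          have : (i.val:ℝ) + 1 ≤ j.val := by exact_mod_cast hlt
          linarith
      have := ff_diff N hN0 ((j.val:ℝ) - i.val) habs
      linarith
  -- global identities
  have hLM : L * M = 1 - ((N : ℝ))⁻¹ • Matrix.of (fun _ _ => (1 : ℝ)) := by
    ext i j
    rw [key]
    simp [Matrix.sub_apply, Matrix.one_apply, one_div]
  have hMs : Mᵀ = M := by
    ext i j
    rw [Matrix.transpose_apply, hM, hM, abs_sub_comm]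
    ring
  have hLs : Lᵀ = L := by
    ext i j
    rw [Matrix.transpose_apply, hL, hL]
    by_cases h : i = j
    · simp [h]
    · simp [h, Ne.symm h, or_comm]
  have hJT : (Matrix.of (fun _ _ => (1 : ℝ)) : Matrix (Fin N) (Fin N) ℝ)ᵀ
      = Matrix.of (fun _ _ => (1 : ℝ)) := rfl
  have hRHS : (1 - ((N : ℝ))⁻¹ • Matrix.of (fun _ _ => (1 : ℝ)) : Matrix (Fin N) (Fin N) ℝ)ᵀ
      = 1 - ((N : ℝ))⁻¹ • Matrix.of (fun _ _ => (1 : ℝ)) := by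
    rw [Matrix.transpose_sub, Matrix.transpose_one, Matrix.transpose_smul, hJT]
  have hML : M * L = 1 - ((N : ℝ))⁻¹ • Matrix.of (fun _ _ => (1 : ℝ)) := by
    calc M * L = Mᵀ * Lᵀ := by rw [hMs, hLs]
      _ = (L * M)ᵀ := (Matrix.transpose_mul L M).symm
      _ = _ := by rw [hLM, hRHS]
  -- M * J = 0
  have hMJ : M * Matrix.of (fun _ _ => (1 : ℝ)) = 0 := by
    ext i j
    rw [Matrix.mul_apply]
    simp only [Matrix.of_apply, mul_one, Matrix.zero_apply]
    have e : ∀ k : Fin N, M i k = c + ff N (((k - i : Fin N)).val : ℝ) := by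
      intro k
      rw [hM' i k]
      congr 1
      have hsub : (k - i : Fin N).val = (N - i.val + k.val) % N := by
        rw [Fin.sub_def]
      rcases Nat.lt_or_ge k.val i.val with hlt | hge
      · have hv : (k - i : Fin N).val = N - i.val + k.val := by
          rw [hsub]
          exact Nat.mod_eq_of_lt (by have := i.isLt; omega)
        have hvr : (((k - i : Fin N)).val : ℝ) = (N : ℝ) - i.val + k.val := by
          rw [hv]
          have h1 : i.val ≤ N := le_of_lt i.isLt
          push_cast [Nat.cast_sub h1]
          ring
        rw [hvr]
        have harg : (k.val : ℝ) - i.val = ((N : ℝ) - i.val + k.val) - N := by ring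
        rw [harg]
        refine ff_per N hN0 _ ?_ ?_
        · have : (i.val : ℝ) ≤ (N:ℝ) - 1 := hub i
          have hk0 : (0:ℝ) ≤ k.val := by positivity
          linarith
        · have : (k.val:ℝ) + 1 ≤ i.val := by exact_mod_cast hlt
          linarith
      · have hv : (k - i : Fin N).val = k.val - i.val := by
          rw [hsub]
          have e' : N - i.val + k.val = (k.val - i.val) + N := by
            have := i.isLt; omega
          rw [e', Nat.add_mod_right]
          exact Nat.mod_eq_of_lt (by have := k.isLt; omega)
        rw [hv]
        push_cast [Nat.cast_sub hge]
        ring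
    rw [Finset.sum_congr rfl (fun k _ => e k), Finset.sum_add_distrib, Finset.sum_const,
      Finset.card_univ, Fintype.card_fin, nsmul_eq_mul]
    have hre : ∑ k : Fin N, ff N (((k - i : Fin N)).val : ℝ)
        = ∑ k : Fin N, ff N ((k.val : ℝ)) := by
      exact Equiv.sum_comp (Equiv.subRight i) (fun k => ff N ((k.val : ℝ)))
    rw [hre, Fin.sum_univ_eq_sum_range (fun t => ff N (t : ℝ)), ff_sum N hN0, hc]
    field_simp
    ring
  have hJM : Matrix.of (fun _ _ => (1 : ℝ)) * M = 0 := by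
    calc Matrix.of (fun _ _ => (1 : ℝ)) * M
        = (Matrix.of (fun _ _ => (1 : ℝ)))ᵀ * Mᵀ := by rw [hJT, hMs]
      _ = (M * Matrix.of (fun _ _ => (1 : ℝ)))ᵀ := (Matrix.transpose_mul _ _).symm
      _ = 0 := by rw [hMJ, Matrix.transpose_zero]
  -- L * J = 0 and J * L = 0
  have hLJ : L * Matrix.of (fun _ _ => (1 : ℝ)) = 0 := by
    ext i j
    rw [Matrix.mul_apply]
    simp only [Matrix.of_apply, mul_one, Matrix.zero_apply]
    simp only [hL']
    rw [Finset.sum_add_distrib, Finset.sum_add_distrib,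
      Finset.sum_ite_eq' Finset.univ i (fun _ => (2:ℝ)),
      Finset.sum_ite_eq' Finset.univ (p i) (fun _ => (-1:ℝ)),
      Finset.sum_ite_eq' Finset.univ (m i) (fun _ => (-1:ℝ))]
    norm_num
  have hJL : Matrix.of (fun _ _ => (1 : ℝ)) * L = 0 := by
    calc Matrix.of (fun _ _ => (1 : ℝ)) * L
        = (Matrix.of (fun _ _ => (1 : ℝ)))ᵀ * Lᵀ := by rw [hJT, hLs]
      _ = (L * Matrix.of (fun _ _ => (1 : ℝ)))ᵀ := (Matrix.transpose_mul _ _).symm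
      _ = 0 := by rw [hLJ, Matrix.transpose_zero]
  refine ⟨?_, ?_, ?_, ?_, hLM, hML, hMJ, hJM⟩
  · rw [hLM, Matrix.sub_mul, one_mul, Matrix.smul_mul, hJL, smul_zero, sub_zero]
  · rw [hML, Matrix.sub_mul, one_mul, Matrix.smul_mul, hJM, smul_zero, sub_zero]
  · rw [hLM, hRHS]
  · rw [hML, hRHS]
end

section
/- Let N ≥ 3 and let S_C be the N×N circulant matrix with (S_C)_{ii} = 1, (S_C)_{ij} = −1 when j ≡ i+1 (mod N), and 0 otherwise (the oriented incidence matrix of the simple cycle). Define M ∈ ℝ^{N×N} by M_{ij} = (N−1)/(2N) − n/N, where n is the unique integer in {0,…,N−1} with n ≡ j − i (mod N). Then M satisfies the four Penrose equations for S_C, i.e. M is the Moore–Penrose pseudoinverse of S_C; in particular M·S_C = S_C·M = I_N − (1/N)·J_N and M·1_N = 0. -/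
open Matrix

/-!
Write `S_C = 1 - P` with `P` the cyclic shift, and `M i j = f (j - i)` for the mean-zero sawtooth
`f k = (N-1)/(2N) - k/N` on `Fin N`. The sawtooth decreases by `1/N` at each step except at
`k = 0`, where it jumps up by `(N-1)/N`; so its first difference is `δ_{k0} - 1/N`, which gives
`S_C M = M S_C = 1 - J/N`. Since `S_C 1 = 0` and `f` sums to zero, `S_C J = 0 = J M`, and the four
Penrose equations reduce to these identities.
-/

namespace CycleIncidence

variable {N : ℕ}

noncomputable def sawtooth (N : ℕ) (k : Fin N) : ℝ :=
  ((N : ℝ) - 1) / (2 * N) - (k.val : ℝ) / N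

lemma sum_fin_val_mul_two (N : ℕ) : (∑ k : Fin N, (k.val : ℝ)) * 2 = N * ((N : ℝ) - 1) := by
  have h := congrArg (Nat.cast (R := ℝ)) (Finset.sum_range_id_mul_two N)
  rcases Nat.eq_zero_or_pos N with rfl | hN
  · simp
  push_cast [Nat.cast_sub hN] at h
  rwa [Fin.sum_univ_eq_sum_range (fun k => (k : ℝ))]

lemma sum_sawtooth (N : ℕ) : ∑ k, sawtooth N k = 0 := by
  rcases Nat.eq_zero_or_pos N with rfl | hN
  · simp
  have hgauss := sum_fin_val_mul_two N
  have hNR : (N : ℝ) ≠ 0 := by positivity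
  simp only [sawtooth, Finset.sum_sub_distrib, ← Finset.sum_div, Finset.sum_const,
    Finset.card_univ, Fintype.card_fin, nsmul_eq_mul]
  field_simp
  linarith

def allOnes (R : Type*) [One R] (N : ℕ) : Matrix (Fin N) (Fin N) R := of fun _ _ => 1

noncomputable def centering (N : ℕ) : Matrix (Fin N) (Fin N) ℝ :=
  1 - (N : ℝ)⁻¹ • allOnes ℝ N

lemma centering_transpose : (centering N)ᵀ = centering N := by
  rw [centering, transpose_sub, transpose_one, transpose_smul]
  rfl

noncomputable def sawtoothMatrix (N : ℕ) [NeZero N] : Matrix (Fin N) (Fin N) ℝ :=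
  of fun i j => sawtooth N (j - i)

def cycleShift (R : Type*) [Zero R] [One R] (N : ℕ) [NeZero N] : Matrix (Fin N) (Fin N) R :=
  (Equiv.addRight (1 : Fin N)).toPEquiv.toMatrix

variable [NeZero N] {R : Type*} [Ring R]

lemma sawtooth_sub_sawtooth_sub_one (k : Fin N) :
    sawtooth N k - sawtooth N (k - 1) = (if k = 0 then 1 else 0) - (N : ℝ)⁻¹ := by
  obtain ⟨n, rfl⟩ : ∃ n, N = n + 1 := Nat.exists_eq_succ_of_ne_zero (NeZero.ne N)
  rw [sawtooth, sawtooth, Fin.coe_sub_one]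
  split_ifs with hk
  · subst hk
    push_cast [Fin.val_zero]
    field_simp
    ring
  · have hk1 : 1 ≤ k.val := Nat.one_le_iff_ne_zero.mpr (Fin.val_ne_zero_iff.mpr hk)
    push_cast [hk1]
    field_simp
    ring

lemma sum_sawtooth_sub_right (i : Fin N) : ∑ k, sawtooth N (k - i) = 0 :=
  ((Equiv.subRight i).sum_comp (sawtooth N)).trans (sum_sawtooth N)

lemma sum_sawtooth_sub_left (j : Fin N) : ∑ k, sawtooth N (j - k) = 0 :=
  ((Equiv.subLeft j).sum_comp (sawtooth N)).trans (sum_sawtooth N)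

lemma one_sub_cycleShift_mul (A : Matrix (Fin N) (Fin N) R) :
    (1 - cycleShift R N) * A = A - A.submatrix (· + 1) id := by
  rw [sub_mul, one_mul, cycleShift, PEquiv.toMatrix_toPEquiv_mul]
  rfl

lemma mul_one_sub_cycleShift (A : Matrix (Fin N) (Fin N) R) :
    A * (1 - cycleShift R N) = A - A.submatrix id (· - 1) := by
  rw [mul_sub, mul_one, cycleShift, PEquiv.mul_toMatrix_toPEquiv, Equiv.addRight_symm]
  congr 1
  ext i j
  simp [sub_eq_add_neg]

lemma one_sub_cycleShift_mul_allOnes : (1 - cycleShift R N) * allOnes R N = 0 := by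
  rw [one_sub_cycleShift_mul, sub_eq_zero]
  rfl

lemma allOnes_mul_sawtoothMatrix : allOnes ℝ N * sawtoothMatrix N = 0 := by
  ext i j
  simp [allOnes, sawtoothMatrix, mul_apply, sum_sawtooth_sub_left]

lemma sawtoothMatrix_mulVec_one : sawtoothMatrix N *ᵥ (fun _ => 1) = 0 := by
  ext i
  simp [sawtoothMatrix, mulVec, dotProduct, sum_sawtooth_sub_right]

lemma one_sub_cycleShift_mul_sawtoothMatrix :
    (1 - cycleShift ℝ N) * sawtoothMatrix N = centering N := by
  ext i j
  rw [one_sub_cycleShift_mul]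
  simp only [Matrix.sub_apply, submatrix_apply, id, sawtoothMatrix, of_apply, sub_add_eq_sub_sub,
    sawtooth_sub_sawtooth_sub_one, sub_eq_zero, @eq_comm _ j i, centering, allOnes,
    Matrix.smul_apply, one_apply, smul_eq_mul, mul_one]

lemma sawtoothMatrix_mul_one_sub_cycleShift :
    sawtoothMatrix N * (1 - cycleShift ℝ N) = centering N := by
  ext i j
  rw [mul_one_sub_cycleShift]
  simp only [Matrix.sub_apply, submatrix_apply, id, sawtoothMatrix, of_apply, sub_right_comm j 1 i,
    sawtooth_sub_sawtooth_sub_one, sub_eq_zero, @eq_comm _ j i, centering, allOnes,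
    Matrix.smul_apply, one_apply, smul_eq_mul, mul_one]

lemma eq_one_sub_cycleShift (hN : 2 ≤ N) {S : Matrix (Fin N) (Fin N) R}
    (hS : ∀ i j, S i j = if i = j then 1 else if j.val = (i.val + 1) % N then -1 else 0) :
    S = 1 - cycleShift R N := by
  have hsucc : ∀ i j : Fin N, j.val = (i.val + 1) % N ↔ i + 1 = j := fun i j => by
    rw [eq_comm, Fin.ext_iff, Fin.val_add, Fin.val_one', Nat.mod_eq_of_lt hN]
  ext i j
  simp only [hS, Matrix.sub_apply, one_apply, cycleShift, PEquiv.toMatrix_apply,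
    Equiv.toPEquiv_apply, Option.mem_def, Option.some_inj, hsucc, Equiv.coe_addRight]
  by_cases hij : i = j
  · -- `i + 1 = i` in `Fin N` only when `N = 1`
    have hN1 : N ≠ 1 := by omega
    simp [hij, hN1]
  · split_ifs <;> simp

lemma eq_sawtoothMatrix {M : Matrix (Fin N) (Fin N) ℝ}
    (hM : ∀ i j, M i j =
      ((N : ℝ) - 1) / (2 * N) - (((j.val + N - i.val) % N : ℕ) : ℝ) / N) :
    M = sawtoothMatrix N := by
  ext i j
  rw [hM, sawtoothMatrix, of_apply, sawtooth, Fin.val_sub, Nat.add_sub_assoc i.isLt.le,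
    add_comm j.val]

end CycleIncidence

open CycleIncidence

/-- The matrix with entries `(N-1)/(2N) - n/N`, where `n ≡ j - i (mod N)` with
`0 ≤ n ≤ N-1`, is the Moore–Penrose pseudoinverse of the circulant incidence matrix
`S_C` of the simple cycle (first row `[1, -1, 0, …, 0]`): it satisfies the four Penrose
equations, and in particular `M·S_C = S_C·M = I - (1/N)·J` and `M·1 = 0`. -/
theorem cycle_incidence_pseudoinverse_formula
    (N : ℕ) (hN : 3 ≤ N)
    (S M : Matrix (Fin N) (Fin N) ℝ)
    (hS : ∀ i j, S i j =
      if i = j then 1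
      else if j.val = (i.val + 1) % N then -1 else 0)
    (hM : ∀ i j, M i j =
      ((N : ℝ) - 1) / (2 * N) - (((j.val + N - i.val) % N : ℕ) : ℝ) / N) :
    S * M * S = S ∧ M * S * M = M ∧ (S * M)ᵀ = S * M ∧ (M * S)ᵀ = M * S ∧
    M * S = 1 - ((N : ℝ))⁻¹ • Matrix.of (fun _ _ => (1 : ℝ)) ∧
    S * M = 1 - ((N : ℝ))⁻¹ • Matrix.of (fun _ _ => (1 : ℝ)) ∧
    M.mulVec (fun _ => 1) = 0 := by
  have : NeZero N := ⟨by omega⟩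
  obtain rfl := eq_one_sub_cycleShift (by omega) hS
  obtain rfl := eq_sawtoothMatrix hM
  have hSM := one_sub_cycleShift_mul_sawtoothMatrix (N := N)
  have hMS := sawtoothMatrix_mul_one_sub_cycleShift (N := N)
  refine ⟨?_, ?_, ?_, ?_, hMS, hSM, sawtoothMatrix_mulVec_one⟩
  · rw [mul_assoc, hMS, centering, mul_sub, mul_one, Matrix.mul_smul,
      one_sub_cycleShift_mul_allOnes, smul_zero, sub_zero]
  · rw [hMS, centering, sub_mul, one_mul, Matrix.smul_mul, allOnes_mul_sawtoothMatrix, smul_zero,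
      sub_zero]
  · rw [hSM, centering_transpose]
  · rw [hMS, centering_transpose]
end

section
/- Let N ≥ 3, let M be an integer with 1 ≤ M < N/2, and let d_1,…,d_M be real weights with d_j ≥ 0 for all j and d_1 > 0. Let L be the N×N symmetric circulant graph Laplacian with diagonal entries ∑_{j=1}^M 2d_j and entry −d_j at positions (i, i±j mod N) for 1 ≤ j ≤ M (all other entries 0), and let L_C be the simple-cycle Laplacian (circulant with diagonal 2 and entries −1 at offsets ±1 mod N). Define P as the N×N symmetric circulant matrix whose first row has entry ∑_{i=1}^M i·d_i at position 0, entry ∑_{i=k+1}^M (i−k)·d_i at positions k and N−k for 1 ≤ k ≤ M−1, and 0 elsewhere. Then L = P·L_C and P is positive definite. -/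
/-!
Let `S` be the cyclic shift and `W_j = 1 + S + ⋯ + S^(j-1)`. Then `L = ∑ d_j (2 - S^j - S^(-j))`
and `L_C = 2 - S - S⁻¹ = (1 - S)(1 - S⁻¹)`. Telescoping gives `W_j (1 - S) = 1 - S^j`, and since
circulant matrices commute, `W_jᵀ W_j L_C = (1 - S^j)(1 - S^(-j)) = 2 - S^j - S^(-j)`. Hence
`L = P L_C` with `P = ∑ d_j W_jᵀ W_j`. The `(i, k)` entry of `W_jᵀ W_j` counts the common points
of two arcs of length `j` starting at `i` and `k`; for `2 j ≤ N` this is `(j - δ)₊`, `δ` being the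
circular distance of `i` and `k`, which gives the first row of `P`. Finally `P` is a nonnegative
combination of Gram matrices containing `d_1 W_1ᵀ W_1 = d_1 I`, so it is positive definite.
-/

open Matrix Finset Fin.NatCast

theorem Units.geom_sum_inv_mul_geom_sum_mul_two_sub_sub {R : Type*} [Ring R] (u : Rˣ) (t : ℕ) :
    (∑ r ∈ range t, (↑u⁻¹ : R) ^ r) * (∑ r ∈ range t, (u : R) ^ r) * (2 - u - ↑u⁻¹) =
      2 - (u : R) ^ t - (↑u⁻¹ : R) ^ t := by
  have hpow : (u : R) ^ t * (↑u⁻¹ : R) ^ t = 1 := by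
    rw [← (u.commute_inv_coe.symm).mul_pow, u.mul_inv, one_pow]
  have hfactor : (2 - u - ↑u⁻¹ : R) = (1 - u) * (1 - ↑u⁻¹) := by
    simp only [mul_sub, sub_mul, one_mul, mul_one, u.mul_inv, ← one_add_one_eq_two]
    abel
  have hcomm : Commute (∑ r ∈ range t, (↑u⁻¹ : R) ^ r) (1 - (u : R) ^ t) :=
    Commute.sum_left _ _ _ fun r _ =>
      (Commute.one_right _).sub_right (u.commute_inv_coe.pow_pow r t)
  calc (∑ r ∈ range t, (↑u⁻¹ : R) ^ r) * (∑ r ∈ range t, (u : R) ^ r) * (2 - u - ↑u⁻¹)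
      = (∑ r ∈ range t, (↑u⁻¹ : R) ^ r) * ((∑ r ∈ range t, (u : R) ^ r) * (1 - u)) *
          (1 - ↑u⁻¹) := by
        rw [hfactor]
        simp only [mul_assoc]
    _ = (1 - (u : R) ^ t) * ((∑ r ∈ range t, (↑u⁻¹ : R) ^ r) * (1 - ↑u⁻¹)) := by
        rw [geom_sum_mul_neg, hcomm.eq, mul_assoc]
    _ = 2 - (u : R) ^ t - (↑u⁻¹ : R) ^ t := by
        rw [geom_sum_mul_neg, sub_mul, one_mul, mul_sub, mul_one, hpow, ← one_add_one_eq_two]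
        abel

theorem Matrix.PosDef.sum_smul {κ n : Type*} [Fintype n] [DecidableEq κ] {s : Finset κ}
    {c : κ → ℝ} {A : κ → Matrix n n ℝ} (hc : ∀ k ∈ s, 0 ≤ c k) (hA : ∀ k ∈ s, (A k).PosSemidef)
    {k₀ : κ} (hk₀ : k₀ ∈ s) (hc₀ : 0 < c k₀) (hA₀ : (A k₀).PosDef) :
    (∑ k ∈ s, c k • A k).PosDef := by
  rw [← add_sum_erase s _ hk₀]
  exact (hA₀.smul hc₀).add_posSemidef
    (posSemidef_sum _ fun k hk =>
      (hA k (mem_of_mem_erase hk)).smul (hc k (mem_of_mem_erase hk)))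

theorem card_filter_range_add_mod_lt {N t a : ℕ} (ht : 2 * t ≤ N) (ha : a < N) :
    #{r ∈ range t | (r + a) % N < t} = t - min a (N - a) := by
  have hmod : ∀ r < t, (r + a) % N = if r + a < N then r + a else r + a - N := fun r hr => by
    split_ifs with h
    · exact Nat.mod_eq_of_lt h
    · rw [Nat.mod_eq_sub_mod (by omega), Nat.mod_eq_of_lt (by omega)]
  have hfilter : ∀ s : Finset ℕ, (∀ r, r ∈ s ↔ r < t ∧ (r + a) % N < t) →
      #{r ∈ range t | (r + a) % N < t} = #s := fun s hs => by
    congr 1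
    ext r
    rw [mem_filter, mem_range, hs]
  rcases le_or_gt (a + t) N with h | h
  · rw [hfilter (range (t - a)) fun r => ?_, card_range]
    · omega
    · rw [mem_range]
      by_cases hr : r < t
      · rw [hmod r hr]; split_ifs <;> omega
      · omega
  · rw [hfilter (Ico (N - a) t) fun r => ?_, Nat.card_Ico]
    · omega
    · rw [mem_Ico]
      by_cases hr : r < t
      · rw [hmod r hr]; split_ifs <;> omega
      · omega

theorem sum_Icc_natCast_tsub_mul {R : Type*} [Ring R] (M δ : ℕ) (d : ℕ → R) :
    ∑ s ∈ Icc 1 M, ((s - δ : ℕ) : R) * d s = ∑ s ∈ Icc (δ + 1) M, ((s : R) - δ) * d s := by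
  rw [← sum_subset (Icc_subset_Icc_left (by omega : 1 ≤ δ + 1)) fun s hs hs' => ?_]
  · exact sum_congr rfl fun s hs => by rw [Nat.cast_sub (by rw [mem_Icc] at hs; omega)]
  · rw [mem_Icc] at hs hs'
    rw [Nat.sub_eq_zero_of_le (by omega), Nat.cast_zero, zero_mul]

section Shift

variable {ι R : Type*} [AddCommGroup ι] [DecidableEq ι] [Ring R]

def shiftMatrix (a : ι) : Matrix ι ι R := circulant (Pi.single a 1)

theorem shiftMatrix_apply (a i j : ι) :
    (shiftMatrix a : Matrix ι ι R) i j = if i - j = a then 1 else 0 := by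
  simp only [shiftMatrix, circulant_apply, Pi.single_apply]

theorem transpose_shiftMatrix (a : ι) :
    (shiftMatrix a : Matrix ι ι R)ᵀ = shiftMatrix (-a) := by
  ext i j
  simp only [transpose_apply, shiftMatrix_apply, ← neg_sub i j, neg_eq_iff_eq_neg]

theorem shiftMatrix_zero : (shiftMatrix 0 : Matrix ι ι R) = 1 :=
  circulant_single_one R ι

def windowMatrix (g : ι) (t : ℕ) : Matrix ι ι R := ∑ r ∈ range t, shiftMatrix (r • g)

def cycleLaplacian (a : ι) : Matrix ι ι R := 2 - shiftMatrix a - shiftMatrix (-a)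

theorem windowMatrix_one_right (g : ι) : (windowMatrix g 1 : Matrix ι ι R) = 1 := by
  rw [windowMatrix, sum_range_one, zero_smul, shiftMatrix_zero]

variable [Fintype ι]

theorem shiftMatrix_add (a b : ι) :
    (shiftMatrix (a + b) : Matrix ι ι R) = shiftMatrix a * shiftMatrix b := by
  rw [shiftMatrix, shiftMatrix, shiftMatrix, circulant_mul, mulVec_single_one]
  congr 1
  ext i
  simp only [col_apply, circulant_apply, Pi.single_apply, sub_eq_iff_eq_add]

theorem shiftMatrix_nsmul (r : ℕ) (a : ι) :
    (shiftMatrix (r • a) : Matrix ι ι R) = shiftMatrix a ^ r := by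
  induction r with
  | zero => rw [zero_nsmul, pow_zero, shiftMatrix_zero]
  | succ r ih => rw [succ_nsmul, pow_succ, shiftMatrix_add, ih]

def shiftUnit (a : ι) : (Matrix ι ι R)ˣ where
  val := shiftMatrix a
  inv := shiftMatrix (-a)
  val_inv := by rw [← shiftMatrix_add, add_neg_cancel, shiftMatrix_zero]
  inv_val := by rw [← shiftMatrix_add, neg_add_cancel, shiftMatrix_zero]

theorem transpose_windowMatrix_mul_windowMatrix_mul_cycleLaplacian (g : ι) (t : ℕ) :
    (windowMatrix g t)ᵀ * windowMatrix g t * cycleLaplacian g =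
      (cycleLaplacian (t • g) : Matrix ι ι R) := by
  set u : (Matrix ι ι R)ˣ := shiftUnit g
  have hwindow : windowMatrix g t = ∑ r ∈ range t, (u : Matrix ι ι R) ^ r :=
    sum_congr rfl fun r _ => shiftMatrix_nsmul r g
  have htranspose : (windowMatrix g t)ᵀ = ∑ r ∈ range t, (↑u⁻¹ : Matrix ι ι R) ^ r := by
    rw [windowMatrix, transpose_sum]
    exact sum_congr rfl fun r _ => by
      rw [transpose_shiftMatrix, ← smul_neg, shiftMatrix_nsmul]; rfl
  have hcycle (s : ℕ) :
      cycleLaplacian (s • g) = 2 - (u : Matrix ι ι R) ^ s - (↑u⁻¹ : Matrix ι ι R) ^ s := by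
    rw [cycleLaplacian, ← smul_neg, shiftMatrix_nsmul, shiftMatrix_nsmul]; rfl
  have hcycle_one : cycleLaplacian g = 2 - (u : Matrix ι ι R) - (↑u⁻¹ : Matrix ι ι R) := by
    simpa only [one_nsmul, pow_one] using hcycle 1
  rw [htranspose, hwindow, hcycle_one, hcycle]
  exact u.geom_sum_inv_mul_geom_sum_mul_two_sub_sub t

end Shift

section Cycle

variable {N : ℕ}

theorem Fin.val_sub_eq_mod (i j : Fin N) : (i - j).val = (i.val + N - j.val) % N := by
  rw [Fin.val_sub]
  congr 1
  omega

theorem Fin.val_sub_add_val_sub {i j : Fin N} (h : i ≠ j) : (i - j).val + (j - i).val = N := by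
  rcases h.lt_or_gt with h | h
  · rw [Fin.coe_sub_iff_lt.2 h, Fin.sub_val_of_le h.le]
    omega
  · rw [Fin.sub_val_of_le h.le, Fin.coe_sub_iff_lt.2 h]
    omega

theorem Fin.val_sub_eq_one_iff (hN : 1 < N) {i j : Fin N} :
    (i - j).val = 1 ↔ i.val = (j.val + 1) % N := by
  have hsucc : (j.val + 1) % N = if j.val + 1 = N then 0 else j.val + 1 := by
    split_ifs with h
    · rw [h, Nat.mod_self]
    · exact Nat.mod_eq_of_lt (by omega)
  rcases le_or_gt j i with h | h
  · rw [Fin.sub_val_of_le h, hsucc]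
    split_ifs <;> omega
  · rw [Fin.coe_sub_iff_lt.2 h, hsucc]
    split_ifs <;> omega

variable [NeZero N] {R : Type*} [Ring R]

theorem Fin.eq_natCast_iff_val_eq {a : Fin N} {r : ℕ} (hr : r < N) :
    a = (r : Fin N) ↔ a.val = r := by
  rw [Fin.ext_iff, Fin.val_natCast, Nat.mod_eq_of_lt hr]

theorem windowMatrix_one_apply {t : ℕ} (ht : t ≤ N) (i j : Fin N) :
    (windowMatrix 1 t : Matrix (Fin N) (Fin N) R) i j = if (i - j).val < t then 1 else 0 := by
  simp only [windowMatrix, Matrix.sum_apply, shiftMatrix_apply, nsmul_one]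
  rw [sum_congr rfl fun r hr =>
    if_congr (Fin.eq_natCast_iff_val_eq ((mem_range.1 hr).trans_le ht)) rfl rfl]
  simp only [sum_ite_eq, mem_range]

theorem transpose_windowMatrix_mul_windowMatrix_one_apply {t : ℕ} (ht : 2 * t ≤ N)
    (i j : Fin N) :
    ((windowMatrix 1 t)ᵀ * windowMatrix 1 t : Matrix (Fin N) (Fin N) R) i j =
      ((t - min (i - j).val (j - i).val : ℕ) : R) := by
  calc ((windowMatrix 1 t)ᵀ * windowMatrix 1 t : Matrix (Fin N) (Fin N) R) i j
      = ∑ k : Fin N, if (k - i).val < t ∧ (k - j).val < t then (1 : R) else 0 := by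
        simp only [mul_apply, transpose_apply, windowMatrix_one_apply (by omega : t ≤ N),
          ite_zero_mul_ite_zero, one_mul]
    _ = ∑ r : Fin N, if r.val < t ∧ (r.val + (i - j).val) % N < t then (1 : R) else 0 := by
        refine (Fintype.sum_equiv (Equiv.addRight i) _ _ fun r => ?_).symm
        rw [Equiv.coe_addRight, add_sub_cancel_right, ← Fin.val_add, add_sub_assoc']
    _ = #{r ∈ range t | (r + (i - j).val) % N < t} := by
        rw [Fin.sum_univ_eq_sum_range
          (fun r => if r < t ∧ (r + (i - j).val) % N < t then (1 : R) else 0), sum_boole]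
        congr 2
        ext r
        simp only [mem_filter, mem_range]
        omega
    _ = ((t - min (i - j).val (j - i).val : ℕ) : R) := by
        have hmin : min (i - j).val (N - (i - j).val) = min (i - j).val (j - i).val := by
          by_cases hij : i = j
          · simp [hij]
          · have := Fin.val_sub_add_val_sub hij
            omega
        rw [card_filter_range_add_mod_lt ht (i - j).isLt, hmin]

theorem sum_smul_transpose_windowMatrix_mul_windowMatrix_apply {M : ℕ} (hM : 2 * M < N)
    (d : ℕ → R) (i j : Fin N) :
    (∑ s ∈ Icc 1 M, d s • ((windowMatrix 1 s)ᵀ * windowMatrix 1 s) :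
        Matrix (Fin N) (Fin N) R) i j =
      if i = j then ∑ s ∈ Icc 1 M, (s : R) * d s
      else if (j - i).val ≤ M - 1 then
        ∑ s ∈ Icc ((j - i).val + 1) M, ((s : R) - ((j - i).val : ℕ)) * d s
      else if (i - j).val ≤ M - 1 then
        ∑ s ∈ Icc ((i - j).val + 1) M, ((s : R) - ((i - j).val : ℕ)) * d s
      else 0 := by
  rw [Matrix.sum_apply, sum_congr rfl fun s hs => by
    rw [Matrix.smul_apply, transpose_windowMatrix_mul_windowMatrix_one_apply
      (by rw [mem_Icc] at hs; omega), smul_eq_mul, ← Nat.cast_comm], sum_Icc_natCast_tsub_mul]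
  by_cases hij : i = j
  · simp [hij]
  · have := Fin.val_sub_add_val_sub hij
    simp only [if_neg hij]
    split_ifs
    · rw [min_eq_right (by omega)]
    · rw [min_eq_left (by omega)]
    · rw [Icc_eq_empty (by omega), sum_empty]

theorem cycleLaplacian_natCast_apply {s : ℕ} (hs : s < N) (i j : Fin N) :
    (cycleLaplacian (s : Fin N) : Matrix (Fin N) (Fin N) R) i j =
      (if i = j then 2 else 0) - (if (i - j).val = s then 1 else 0) -
        (if (j - i).val = s then 1 else 0) := by
  have hneg : i - j = -(s : Fin N) ↔ (j - i).val = s := by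
    rw [← neg_sub j i, neg_inj, Fin.eq_natCast_iff_val_eq hs]
  simp only [cycleLaplacian, Matrix.sub_apply, ofNat_apply, shiftMatrix_apply,
    Fin.eq_natCast_iff_val_eq hs, hneg, Nat.cast_ite, Nat.cast_ofNat, Nat.cast_zero]

theorem sum_smul_cycleLaplacian_apply {M : ℕ} (hM : 2 * M < N) (d : ℕ → R) (i j : Fin N) :
    (∑ s ∈ Icc 1 M, d s • cycleLaplacian (s : Fin N) : Matrix (Fin N) (Fin N) R) i j =
      if i = j then ∑ s ∈ Icc 1 M, 2 * d s
      else if (j - i).val ≤ M then -d (j - i).val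
      else if (i - j).val ≤ M then -d (i - j).val
      else 0 := by
  have hentry : ∀ s ∈ Icc 1 M,
      (d s • cycleLaplacian (s : Fin N) : Matrix (Fin N) (Fin N) R) i j =
        (if i = j then 2 * d s else 0) - (if (i - j).val = s then d s else 0) -
          (if (j - i).val = s then d s else 0) := fun s hs => by
    rw [Matrix.smul_apply, cycleLaplacian_natCast_apply (by rw [mem_Icc] at hs; omega),
      smul_eq_mul]
    simp only [mul_sub, mul_ite, mul_one, mul_zero, mul_two, two_mul]
  rw [Matrix.sum_apply, sum_congr rfl hentry, sum_sub_distrib, sum_sub_distrib, sum_ite_irrel]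
  simp only [sum_const_zero, sum_ite_eq, mem_Icc]
  by_cases hij : i = j
  · simp [hij]
  · have := Fin.val_sub_add_val_sub hij
    have hji : (j - i).val ≠ 0 := by rw [Ne, Fin.val_eq_zero_iff, sub_eq_zero]; exact Ne.symm hij
    have hij' : (i - j).val ≠ 0 := by rw [Ne, Fin.val_eq_zero_iff, sub_eq_zero]; exact hij
    simp only [if_neg hij]
    split_ifs <;> first | omega | abel

theorem cycleLaplacian_one_apply (hN : 3 ≤ N) (i j : Fin N) :
    (cycleLaplacian 1 : Matrix (Fin N) (Fin N) R) i j =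
      if i = j then 2
      else if j.val = (i.val + 1) % N ∨ i.val = (j.val + 1) % N then -1 else 0 := by
  rw [show (1 : Fin N) = ((1 : ℕ) : Fin N) from Nat.cast_one.symm,
    cycleLaplacian_natCast_apply (by omega)]
  simp only [← Fin.val_sub_eq_one_iff (show 1 < N by omega)]
  by_cases hij : i = j
  · simp [hij]
  · have := Fin.val_sub_add_val_sub hij
    simp only [if_neg hij]
    split_ifs <;> first | omega | abel

end Cycle

theorem circulant_laplacian_decomposition_general
    (N M : ℕ) (hM1 : 1 ≤ M) (hM2 : 2 * M < N)
    (d : ℕ → ℝ) (hd : ∀ j ∈ Finset.Icc 1 M, 0 ≤ d j) (hd1 : 0 < d 1)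
    (L LC P : Matrix (Fin N) (Fin N) ℝ)
    (hL : ∀ i j, L i j =
      if i = j then ∑ t ∈ Finset.Icc 1 M, 2 * d t
      else if (j.val + N - i.val) % N ≤ M then -d ((j.val + N - i.val) % N)
      else if (i.val + N - j.val) % N ≤ M then -d ((i.val + N - j.val) % N)
      else 0)
    (hLC : ∀ i j, LC i j =
      if i = j then 2
      else if j.val = (i.val + 1) % N ∨ i.val = (j.val + 1) % N then -1 else 0)
    (hP : ∀ i j, P i j =
      if i = j then ∑ t ∈ Finset.Icc 1 M, (t : ℝ) * d t
      else if (j.val + N - i.val) % N ≤ M - 1 then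
        ∑ t ∈ Finset.Icc ((j.val + N - i.val) % N + 1) M,
          ((t : ℝ) - (((j.val + N - i.val) % N : ℕ) : ℝ)) * d t
      else if (i.val + N - j.val) % N ≤ M - 1 then
        ∑ t ∈ Finset.Icc ((i.val + N - j.val) % N + 1) M,
          ((t : ℝ) - (((i.val + N - j.val) % N : ℕ) : ℝ)) * d t
      else 0) :
    L = P * LC ∧ P.PosDef := by
  have : NeZero N := ⟨by omega⟩
  have hL' : L = ∑ s ∈ Icc 1 M, d s • cycleLaplacian (s : Fin N) := by
    ext i j
    rw [hL, sum_smul_cycleLaplacian_apply hM2, Fin.val_sub_eq_mod, Fin.val_sub_eq_mod]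
  have hLC' : LC = cycleLaplacian 1 := by
    ext i j
    rw [hLC, cycleLaplacian_one_apply (by omega)]
  have hP' : P = ∑ s ∈ Icc 1 M, d s • ((windowMatrix 1 s)ᵀ * windowMatrix 1 s) := by
    ext i j
    rw [hP, sum_smul_transpose_windowMatrix_mul_windowMatrix_apply hM2, Fin.val_sub_eq_mod,
      Fin.val_sub_eq_mod]
  refine ⟨?_, ?_⟩
  · rw [hL', hP', hLC', sum_mul]
    refine sum_congr rfl fun s _ => ?_
    rw [smul_mul_assoc, transpose_windowMatrix_mul_windowMatrix_mul_cycleLaplacian, nsmul_one]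
  · rw [hP']
    refine PosDef.sum_smul hd (fun s _ => ?_) (left_mem_Icc.2 hM1) hd1 ?_
    · rw [← conjTranspose_eq_transpose_of_trivial]
      exact posSemidef_conjTranspose_mul_self _
    · rw [windowMatrix_one_right, transpose_one, mul_one]
      exact PosDef.one

/-- The symmetric circulant graph Laplacian `L` of a connected circulant graph with
generating set `{1, …, M}` (bandwidth `M < N/2`, nonnegative weights `d j`, `d 1 > 0`)
factors as `L = P · L_C`, where `L_C` is the simple-cycle Laplacian and `P` is the
positive definite symmetric circulant matrix whose first row has entry `∑_{i=1}^M i·d i`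
at position `0` and `∑_{i=k+1}^M (i-k)·d i` at positions `k` and `N-k` for
`1 ≤ k ≤ M-1`. -/
theorem circulant_laplacian_decomposition
    (N M : ℕ) (hN : 3 ≤ N) (hM1 : 1 ≤ M) (hM2 : 2 * M < N)
    (d : ℕ → ℝ) (hd : ∀ j ∈ Finset.Icc 1 M, 0 ≤ d j) (hd1 : 0 < d 1)
    (L LC P : Matrix (Fin N) (Fin N) ℝ)
    (hL : ∀ i j, L i j =
      if i = j then ∑ t ∈ Finset.Icc 1 M, 2 * d t
      else if (j.val + N - i.val) % N ≤ M then -d ((j.val + N - i.val) % N)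
      else if (i.val + N - j.val) % N ≤ M then -d ((i.val + N - j.val) % N)
      else 0)
    (hLC : ∀ i j, LC i j =
      if i = j then 2
      else if j.val = (i.val + 1) % N ∨ i.val = (j.val + 1) % N then -1 else 0)
    (hP : ∀ i j, P i j =
      if i = j then ∑ t ∈ Finset.Icc 1 M, (t : ℝ) * d t
      else if (j.val + N - i.val) % N ≤ M - 1 then
        ∑ t ∈ Finset.Icc ((j.val + N - i.val) % N + 1) M,
          ((t : ℝ) - (((j.val + N - i.val) % N : ℕ) : ℝ)) * d t
      else if (i.val + N - j.val) % N ≤ M - 1 then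
        ∑ t ∈ Finset.Icc ((i.val + N - j.val) % N + 1) M,
          ((t : ℝ) - (((i.val + N - j.val) % N : ℕ) : ℝ)) * d t
      else 0) :
    L = P * LC ∧ P.PosDef :=
  circulant_laplacian_decomposition_general N M hM1 hM2 d hd hd1 L LC P hL hLC hP
end

section
/- Let N ≥ 3 and let L, L_C, P be N×N real circulant matrices with L = P·L_C, P invertible, and every row of L summing to zero (L·1_N = 0). Let M_C be a circulant matrix with L_C·M_C = M_C·L_C = I_N − (1/N)·J_N and M_C·J_N = 0. Then the matrix M := P^{−1}·M_C satisfies the four Penrose equations for L; i.e. the Moore–Penrose pseudoinverse of the circulant graph Laplacian L factors as L† = P^{−1}·L_C†. -/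
open Matrix

/-- If the circulant matrices `L`, `L_C`, `P` satisfy `L = P · L_C` with `P` invertible
and `L` having zero row sums, and the circulant matrix `M_C` satisfies
`L_C·M_C = M_C·L_C = I - (1/N)·J` and `M_C·J = 0` (i.e. `M_C` is the Moore–Penrose
pseudoinverse of `L_C`), then `M := P⁻¹ · M_C` satisfies the four Penrose equations for
`L`; the pseudoinverse of the circulant Laplacian factors as `L† = P⁻¹ · L_C†`. -/
theorem circulant_laplacian_pseudoinverse_factorization
    (N : ℕ) (hN : 3 ≤ N)
    (vL vC vP vM : Fin N → ℝ)
    (L LC P MC : Matrix (Fin N) (Fin N) ℝ)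
    (hLcirc : L = Matrix.circulant vL)
    (hLCcirc : LC = Matrix.circulant vC)
    (hPcirc : P = Matrix.circulant vP)
    (hMCcirc : MC = Matrix.circulant vM)
    (hfact : L = P * LC)
    (hPunit : IsUnit P.det)
    (hrows : L.mulVec (fun _ => 1) = 0)
    (hLCMC : LC * MC = 1 - ((N : ℝ))⁻¹ • Matrix.of (fun _ _ => (1 : ℝ)))
    (hMCLC : MC * LC = 1 - ((N : ℝ))⁻¹ • Matrix.of (fun _ _ => (1 : ℝ)))
    (hMCJ : MC * Matrix.of (fun _ _ => (1 : ℝ)) = 0) :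
    L * (P⁻¹ * MC) * L = L ∧
    (P⁻¹ * MC) * L * (P⁻¹ * MC) = P⁻¹ * MC ∧
    (L * (P⁻¹ * MC))ᵀ = L * (P⁻¹ * MC) ∧
    ((P⁻¹ * MC) * L)ᵀ = (P⁻¹ * MC) * L := by
  set J : Matrix (Fin N) (Fin N) ℝ := Matrix.of (fun _ _ => (1 : ℝ)) with hJ
  have hPinv : P⁻¹ * P = 1 := Matrix.nonsing_inv_mul P hPunit
  have hPinv' : P * P⁻¹ = 1 := Matrix.mul_nonsing_inv P hPunit
  have hcomm : P * LC = LC * P := by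
    rw [hPcirc, hLCcirc]; exact Matrix.Fin.circulant_mul_comm _ _
  have hcommM : P * MC = MC * P := by
    rw [hPcirc, hMCcirc]; exact Matrix.Fin.circulant_mul_comm _ _
  have hinvLC : P⁻¹ * LC = LC * P⁻¹ := by
    calc P⁻¹ * LC = P⁻¹ * LC * (P * P⁻¹) := by rw [hPinv', mul_one]
    _ = P⁻¹ * (LC * P) * P⁻¹ := by simp only [Matrix.mul_assoc]
    _ = P⁻¹ * (P * LC) * P⁻¹ := by rw [hcomm]
    _ = (P⁻¹ * P) * LC * P⁻¹ := by simp only [Matrix.mul_assoc]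
    _ = LC * P⁻¹ := by rw [hPinv, one_mul]
  have hLM : L * (P⁻¹ * MC) = LC * MC := by
    calc L * (P⁻¹ * MC) = P * LC * (P⁻¹ * MC) := by rw [hfact]
    _ = P * (LC * P⁻¹) * MC := by simp only [Matrix.mul_assoc]
    _ = P * (P⁻¹ * LC) * MC := by rw [hinvLC]
    _ = (P * P⁻¹) * (LC * MC) := by simp only [Matrix.mul_assoc]
    _ = LC * MC := by rw [hPinv', one_mul]
  have hML : (P⁻¹ * MC) * L = MC * LC := by
    calc (P⁻¹ * MC) * L = P⁻¹ * MC * (P * LC) := by rw [hfact]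
    _ = P⁻¹ * (MC * P) * LC := by simp only [Matrix.mul_assoc]
    _ = P⁻¹ * (P * MC) * LC := by rw [hcommM]
    _ = (P⁻¹ * P) * (MC * LC) := by simp only [Matrix.mul_assoc]
    _ = MC * LC := by rw [hPinv, one_mul]
  have hLJ : L * J = 0 := by
    ext i j
    have := congrFun hrows i
    simpa [Matrix.mulVec, Matrix.mul_apply, hJ, dotProduct] using this
  have hMJ : (P⁻¹ * MC) * J = 0 := by
    rw [Matrix.mul_assoc, hMCJ, Matrix.mul_zero]
  have hJsymm : Jᵀ = J := by ext i j; simp [hJ]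
  refine ⟨?_, ?_, ?_, ?_⟩
  · rw [Matrix.mul_assoc, hML, hMCLC, Matrix.mul_sub, Matrix.mul_one,
      Matrix.mul_smul, hLJ, smul_zero, sub_zero]
  · rw [Matrix.mul_assoc (P⁻¹ * MC) L (P⁻¹ * MC), hLM, hLCMC,
      Matrix.mul_sub, Matrix.mul_one, Matrix.mul_smul, hMJ, smul_zero, sub_zero]
  · rw [hLM, hLCMC, Matrix.transpose_sub, Matrix.transpose_one, Matrix.transpose_smul, hJsymm]
  · rw [hML, hMCLC, Matrix.transpose_sub, Matrix.transpose_one, Matrix.transpose_smul, hJsymm]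
end

section
/- Let N ≥ 3, let M be an integer with 1 ≤ M < N/2, let d_1,…,d_M ∈ ℝ, and let L be the N×N circulant graph Laplacian with diagonal entries ∑_{j=1}^M 2d_j and entry −d_j at positions (i, i±j mod N). Let k ≥ 1 be an integer with 2kM ≤ N−1. Then for every real polynomial p of degree at most 2k, the vector x ∈ ℝ^N defined by x_i = p(i) for 0 ≤ i ≤ N−1 satisfies (L^k·x)_{i₁} = (L^k·x)_{i₂} for all integers i₁, i₂ with kM ≤ i₁, i₂ ≤ N−1−kM. In particular, for every offset s with 1 ≤ s ≤ M and every i with kM ≤ i and i+s ≤ N−1−kM, the oriented edge difference (L^k·x)_i − (L^k·x)_{i+s} vanishes, i.e. the operator S·L^k annihilates polynomial signals of degree up to 2k away from the wrap-around boundary. -/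
/-!
Away from the wrap-around, row `i` of `L` is the stencil `∑ₜ dₜ (2 δᵢ - δᵢ₊ₜ - δᵢ₋ₜ)`,
so on samples of a polynomial `q` it returns the samples of the polynomial
`∑ₜ dₜ (2 q(X) - q(X + t) - q(X - t))`. Each symmetric second difference is a shifted twofold
forward difference, so this operation lowers the degree by two. By induction, `Lᵐ x` agrees on
`[mM, N - 1 - mM]` with the samples of the `m`-fold image of `p`; for `m = k` that polynomial
has degree `0`, hence is constant.
-/

open Matrix Polynomial Finset

section

variable {R : Type*} [CommRing R]

namespace Polynomial

lemma natDegree_taylor_sub_le (p : R[X]) (r : R) :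
    (taylor r p - p).natDegree ≤ p.natDegree - 1 :=
  natDegree_le_pred
    ((natDegree_sub_le _ _).trans (by rw [natDegree_taylor, max_self]))
    (by rw [coeff_sub, coeff_taylor_natDegree, coeff_natDegree, sub_self])

lemma two_mul_sub_taylor_sub_taylor_neg (p : R[X]) (r : R) :
    2 * p - taylor r p - taylor (-r) p =
      -taylor (-r) (taylor r (taylor r p - p) - (taylor r p - p)) := by
  simp only [map_sub, taylor_taylor, neg_add_cancel, taylor_zero, neg_add_cancel_left]
  ring

lemma natDegree_two_mul_sub_taylor_sub_taylor_neg_le (p : R[X]) (r : R) :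
    (2 * p - taylor r p - taylor (-r) p).natDegree ≤ p.natDegree - 2 := by
  rw [two_mul_sub_taylor_sub_taylor_neg, natDegree_neg, natDegree_taylor]
  have := natDegree_taylor_sub_le (taylor r p - p) r
  have := natDegree_taylor_sub_le p r
  omega

end Polynomial

noncomputable def laplacianStencil (d : ℕ → R) (M : ℕ) (p : R[X]) : R[X] :=
  ∑ t ∈ Icc 1 M, C (d t) * (2 * p - taylor (t : R) p - taylor (-(t : R)) p)

lemma eval_laplacianStencil (d : ℕ → R) (M : ℕ) (p : R[X]) (y : R) :
    (laplacianStencil d M p).eval y =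
      ∑ t ∈ Icc 1 M, d t * (2 * p.eval y - p.eval (y + t) - p.eval (y - t)) := by
  simp [laplacianStencil, eval_finsetSum, taylor_eval, sub_eq_add_neg]

lemma natDegree_laplacianStencil_iterate_le (d : ℕ → R) (M m : ℕ) (p : R[X]) :
    ((laplacianStencil d M)^[m] p).natDegree ≤ p.natDegree - 2 * m := by
  induction m generalizing p with
  | zero => simp
  | succ m ih =>
    have hstep : (laplacianStencil d M p).natDegree ≤ p.natDegree - 2 :=
      natDegree_sum_le_of_forall_le _ _ fun t _ =>
        (natDegree_C_mul_le _ _).trans (natDegree_two_mul_sub_taylor_sub_taylor_neg_le p t)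
    rw [Function.iterate_succ_apply]
    exact (ih _).trans (by omega)

def circulantLaplacian (N M : ℕ) (d : ℕ → R) : Matrix (Fin N) (Fin N) R :=
  Matrix.of fun i j =>
    if i = j then ∑ t ∈ Icc 1 M, 2 * d t
    else if (j.val + N - i.val) % N ≤ M then -d ((j.val + N - i.val) % N)
    else if (i.val + N - j.val) % N ≤ M then -d ((i.val + N - j.val) % N)
    else 0

lemma add_sub_mod_eq_ite {N i j : ℕ} (hi : i < N) (hj : j < N) :
    (j + N - i) % N = if i ≤ j then j - i else j + N - i := by
  split_ifs with h
  · rw [show j + N - i = j - i + N by omega, Nat.add_mod_right, Nat.mod_eq_of_lt (by omega)]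
  · exact Nat.mod_eq_of_lt (by omega)

lemma sum_Icc_ite_add_eq (d : ℕ → R) (M a b : ℕ) :
    ∑ t ∈ Icc 1 M, (if a + t = b then d t else 0) =
      if a < b ∧ b ≤ a + M then d (b - a) else 0 := by
  split_ifs with h
  · rw [sum_eq_single_of_mem (b - a) (by simp only [mem_Icc]; omega)]
    · simp [show a + (b - a) = b by omega]
    · intro t _ ht
      simp [show a + t ≠ b by omega]
  · refine sum_eq_zero fun t ht => ?_
    simp only [mem_Icc] at ht
    simp [show a + t ≠ b by omega]

lemma circulantLaplacian_apply_of_interior {N M : ℕ} (d : ℕ → R) {i : Fin N}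
    (hi : M ≤ i) (hiN : i + M < N) (j : Fin N) :
    circulantLaplacian N M d i j = ∑ t ∈ Icc 1 M, d t * (2 * (if i = j then 1 else 0)
      - (if i.val + t = j then 1 else 0) - (if j.val + t = i then 1 else 0)) := by
  have hsum : ∑ t ∈ Icc 1 M, d t * (2 * (if i = j then 1 else 0)
      - (if i.val + t = j then 1 else 0) - (if j.val + t = i then 1 else 0)) =
      (if i = j then ∑ t ∈ Icc 1 M, 2 * d t else 0)
        - (if i.val < j ∧ j.val ≤ i + M then d (j - i) else 0)
        - (if j.val < i ∧ i.val ≤ j + M then d (i - j) else 0) := by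
    simp only [mul_sub, mul_ite, mul_one, mul_zero, sum_sub_distrib, sum_ite_irrel, sum_const_zero,
      sum_Icc_ite_add_eq]
    simp only [mul_comm (d _)]
  rw [hsum, circulantLaplacian, of_apply, add_sub_mod_eq_ite i.isLt j.isLt,
    add_sub_mod_eq_ite j.isLt i.isLt]
  rcases lt_trichotomy i j with hij | rfl | hij
  · have hlt : i.val < j.val := hij
    split_ifs <;> first | omega | simp_all
  · simp
  · have hlt : j.val < i.val := hij
    split_ifs <;> first | omega | simp_all

lemma Fin.sum_ite_val_eq {N c : ℕ} (hc : c < N) (v : Fin N → R) :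
    ∑ j : Fin N, (if c = j.val then v j else 0) = v ⟨c, hc⟩ := by
  simp only [← Fin.ext_iff (a := ⟨c, hc⟩), sum_ite_eq, mem_univ, if_true]

lemma circulantLaplacian_mulVec_apply_of_interior {N M : ℕ} (d : ℕ → R) {i : Fin N}
    (hi : M ≤ i) (hiN : i + M < N) (v : Fin N → R) (f : R → R)
    (hv : ∀ j : Fin N, i ≤ j + M → j ≤ i + M → v j = f j) :
    (circulantLaplacian N M d *ᵥ v) i =
      ∑ t ∈ Icc 1 M, d t * (2 * f i - f (i + t) - f (i - t)) := by
  simp only [mulVec, dotProduct, circulantLaplacian_apply_of_interior d hi hiN, sum_mul]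
  rw [sum_comm]
  refine sum_congr rfl fun t ht => ?_
  simp only [mem_Icc] at ht
  have hminus : ∀ j : Fin N, (j.val + t = i) ↔ (i.val - t = j) := fun j => by omega
  simp only [mul_assoc, ← mul_sum, sub_mul, ite_mul, one_mul, zero_mul, sum_sub_distrib, hminus]
  rw [sum_ite_eq, if_pos (mem_univ _), Fin.sum_ite_val_eq (by omega),
    Fin.sum_ite_val_eq (by omega), hv i (by omega) (by omega),
    hv _ (by dsimp only; omega) (by dsimp only; omega),
    hv _ (by dsimp only; omega) (by dsimp only; omega)]
  push_cast [Nat.cast_sub (ht.2.trans hi)]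
  ring

lemma circulantLaplacian_pow_mulVec_apply_of_interior {N M : ℕ} (d : ℕ → R) (p : R[X])
    (x : Fin N → R) (hx : ∀ i, x i = p.eval (i.val : R)) (m : ℕ) {i : Fin N}
    (hi : m * M ≤ i) (hiN : i + m * M < N) :
    (circulantLaplacian N M d ^ m *ᵥ x) i = ((laplacianStencil d M)^[m] p).eval (i.val : R) := by
  induction m generalizing i with
  | zero => simp [hx]
  | succ m ih =>
    rw [add_one_mul] at hi hiN
    rw [pow_succ', ← mulVec_mulVec, Function.iterate_succ_apply', eval_laplacianStencil]
    exact circulantLaplacian_mulVec_apply_of_interior d (by omega) (by omega) _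
      ((laplacianStencil d M)^[m] p).eval fun j hj hj' => ih (by omega) (by omega)

end

theorem circulant_SLk_annihilates_polynomials_general
    (N M k : ℕ)
    (d : ℕ → ℝ)
    (L : Matrix (Fin N) (Fin N) ℝ)
    (hL : ∀ i j, L i j =
      if i = j then ∑ t ∈ Finset.Icc 1 M, 2 * d t
      else if (j.val + N - i.val) % N ≤ M then -d ((j.val + N - i.val) % N)
      else if (i.val + N - j.val) % N ≤ M then -d ((i.val + N - j.val) % N)
      else 0)
    (p : Polynomial ℝ) (hp : p.natDegree ≤ 2 * k)
    (x : Fin N → ℝ) (hx : ∀ i, x i = p.eval ((i.val : ℝ))) :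
    ∀ i₁ i₂ : Fin N,
      k * M ≤ i₁.val → i₁.val ≤ N - 1 - k * M →
      k * M ≤ i₂.val → i₂.val ≤ N - 1 - k * M →
      (L ^ k).mulVec x i₁ = (L ^ k).mulVec x i₂ := by
  intro i₁ i₂ hi₁ hi₁' hi₂ hi₂'
  obtain rfl : L = circulantLaplacian N M d := Matrix.ext hL
  obtain ⟨c, hc⟩ : ∃ c, (laplacianStencil d M)^[k] p = C c :=
    ⟨_, eq_C_of_natDegree_le_zero
      ((natDegree_laplacianStencil_iterate_le d M k p).trans (by omega))⟩
  rw [circulantLaplacian_pow_mulVec_apply_of_interior d p x hx k hi₁ (by omega),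
    circulantLaplacian_pow_mulVec_apply_of_interior d p x hx k hi₂ (by omega), hc, eval_C, eval_C]

/-- For the circulant graph Laplacian `L` of bandwidth `M` (weights `d j` at offsets
`±j mod N`, `1 ≤ j ≤ M`) and `k ≥ 1` with `2kM ≤ N-1`, the operator `L^k` maps every
polynomial signal of degree at most `2k` to a vector that is constant on the interior
interval `[kM, N-1-kM]`; in particular the edge differences of `L^k·x` (the operator
`S·L^k`) vanish there, i.e. `S·L^k` annihilates polynomials of degree up to `2k` away
from the wrap-around boundary. -/
theorem circulant_SLk_annihilates_polynomials
    (N M k : ℕ) (hN : 3 ≤ N) (hM1 : 1 ≤ M) (hM2 : 2 * M < N)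
    (hk : 1 ≤ k) (hkM : 2 * k * M ≤ N - 1)
    (d : ℕ → ℝ)
    (L : Matrix (Fin N) (Fin N) ℝ)
    (hL : ∀ i j, L i j =
      if i = j then ∑ t ∈ Finset.Icc 1 M, 2 * d t
      else if (j.val + N - i.val) % N ≤ M then -d ((j.val + N - i.val) % N)
      else if (i.val + N - j.val) % N ≤ M then -d ((i.val + N - j.val) % N)
      else 0)
    (p : Polynomial ℝ) (hp : p.natDegree ≤ 2 * k)
    (x : Fin N → ℝ) (hx : ∀ i, x i = p.eval ((i.val : ℝ))) :
    ∀ i₁ i₂ : Fin N,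
      k * M ≤ i₁.val → i₁.val ≤ N - 1 - k * M →
      k * M ≤ i₂.val → i₂.val ≤ N - 1 - k * M →
      (L ^ k).mulVec x i₁ = (L ^ k).mulVec x i₂ :=
  circulant_SLk_annihilates_polynomials_general N M k d L hL p hp x hx
end

section
/- Let N ≥ 3 and let α ∈ ℝ satisfy α ∉ πℤ and Nα ∉ 2πℤ. Let L_{C,α} = 2cos(α)·I_N − A_C be the generalized simple-cycle Laplacian, viewed as an N×N complex matrix. Define M ∈ ℂ^{N×N} by M_{mn} = e^{iα|n−m|} / ((e^{iα} − e^{−iα})(e^{iαN} − 1)) + e^{−iα|n−m|} / ((e^{−iα} − e^{iα})(e^{−iαN} − 1)) for 0 ≤ m,n ≤ N−1 (with |n−m| the ordinary absolute value of integers). Then L_{C,α}·M = I_N, i.e. M is the inverse of L_{C,α}. -/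
/-!
With `q = e^{iα}` and `d = |n - m|`, the two summands of `M_{mn}` combine to
`(q^d + q^(N-d)) / ((q - q⁻¹)(q^N - 1))`. The kernel `g d = q^d + q^(N-d)` satisfies
`g (d + 1) + g (d - 1) = (q + q⁻¹) g d` and `g (N - d) = g d`, so `M` only depends on the
cyclic distance `x = (n - m) mod N`, and `(q + q⁻¹) g x - g (x + 1) - g (x - 1)` vanishes
except at `x = 0`, where the wrap-around replaces `g (-1)` by `g (N - 1)` and leaves
`g (-1) - g (N - 1) = (q - q⁻¹)(q^N - 1)`. The conditions on `α` say exactly that `q² ≠ 1` and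
`q^N ≠ 1`, i.e. that this constant is nonzero.
-/

open Matrix

theorem SimpleGraph.cycleGraph_adjMatrix_apply {α : Type*} [Zero α] [One α] {n : ℕ}
    (i j : Fin (n + 2)) :
    (cycleGraph (n + 2)).adjMatrix α i j =
      if j.val = (i.val + 1) % (n + 2) ∨ i.val = (j.val + 1) % (n + 2) then 1 else 0 := by
  have hsub (a b : Fin (n + 2)) : a - b = 1 ↔ a.val = (b.val + 1) % (n + 2) := by
    rw [sub_eq_iff_eq_add', Fin.ext_iff, Fin.val_add, Fin.val_one]
  simp only [adjMatrix_apply, cycleGraph_adj, hsub, or_comm]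

theorem SimpleGraph.cycleGraph_adjMatrix_mul_apply {α : Type*} [NonAssocSemiring α] {n : ℕ}
    (M : Matrix (Fin (n + 3)) (Fin (n + 3)) α) (i j : Fin (n + 3)) :
    ((cycleGraph (n + 3)).adjMatrix α * M) i j = M (i - 1) j + M (i + 1) j := by
  rw [adjMatrix_mul_apply, cycleGraph_neighborFinset, Finset.sum_pair]
  rw [Ne, sub_eq_iff_eq_add, add_assoc, left_eq_add, Fin.ext_iff, Fin.val_add]
  simp [Nat.mod_eq_of_lt (show 2 < n + 3 by omega)]

section CycleKernel

variable {K : Type*} [Field K] {q : K} {N : ℕ}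

def cycleKernel (q : K) (N : ℕ) (d : ℤ) : K := q ^ d + q ^ ((N : ℤ) - d)

theorem cycleKernel_natCast_sub (d : ℤ) : cycleKernel q N (N - d) = cycleKernel q N d := by
  rw [cycleKernel, cycleKernel, sub_sub_cancel, add_comm]

theorem cycleKernel_add_one_add_cycleKernel_sub_one (hq : q ≠ 0) (d : ℤ) :
    cycleKernel q N (d + 1) + cycleKernel q N (d - 1) = (q + q⁻¹) * cycleKernel q N d := by
  rw [cycleKernel, cycleKernel, cycleKernel, show (N : ℤ) - (d + 1) = N - d - 1 by ring,
    show (N : ℤ) - (d - 1) = N - d + 1 by ring]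
  simp only [zpow_add_one₀ hq, zpow_sub_one₀ hq]
  ring

theorem cycleKernel_neg_one_sub (hq : q ≠ 0) :
    cycleKernel q N (-1) - cycleKernel q N (N - 1) = (q - q⁻¹) * (q ^ N - 1) := by
  simp only [cycleKernel, sub_neg_eq_add, sub_sub_cancel, zpow_add_one₀ hq, zpow_sub_one₀ hq,
    _root_.zpow_neg_one, zpow_one, zpow_natCast]
  ring

theorem cycleKernel_abs_sub (m n : Fin N) :
    cycleKernel q N |(n.val : ℤ) - m.val| = cycleKernel q N (n - m).val := by
  rcases le_or_gt m n with hmn | hnm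
  · rw [Fin.sub_val_of_le hmn, abs_of_nonneg (by omega), Nat.cast_sub hmn]
  · rw [Fin.coe_sub_iff_lt.mpr hnm, abs_of_neg (by omega), ← cycleKernel_natCast_sub]
    congr 1
    omega

theorem cycleKernel_val_add_one {n : ℕ} (x : Fin (n + 1)) :
    cycleKernel q (n + 1) (x + 1 : Fin (n + 1)).val = cycleKernel q (n + 1) (x.val + 1) := by
  rw [Fin.val_add_one]
  split_ifs with hx
  · subst hx
    simpa using (cycleKernel_natCast_sub (q := q) (N := n + 1) 0).symm
  · push_cast
    rfl

theorem cycleKernel_val_sub_one {n : ℕ} {x : Fin (n + 1)} (hx : x ≠ 0) :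
    cycleKernel q (n + 1) (x - 1 : Fin (n + 1)).val = cycleKernel q (n + 1) (x.val - 1) := by
  have hx_pos := Fin.pos_iff_ne_zero.mpr hx
  rw [Fin.coe_sub_one, if_neg hx, Nat.cast_sub (by omega)]
  rfl

theorem cycleKernel_second_difference (hq : q ≠ 0) {n : ℕ} (x : Fin (n + 1)) :
    (q + q⁻¹) * cycleKernel q (n + 1) x.val - (cycleKernel q (n + 1) (x + 1 : Fin (n + 1)).val
        + cycleKernel q (n + 1) (x - 1 : Fin (n + 1)).val)
      = if x = 0 then (q - q⁻¹) * (q ^ (n + 1) - 1) else 0 := by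
  rw [cycleKernel_val_add_one, ← cycleKernel_add_one_add_cycleKernel_sub_one hq]
  split_ifs with hx
  · subst hx
    have h := cycleKernel_neg_one_sub (N := n + 1) hq
    rw [Nat.cast_succ, add_sub_cancel_right] at h
    rw [Fin.coe_sub_one, if_pos rfl, Fin.val_zero, Nat.cast_zero, zero_add, zero_sub, ← h]
    ring
  · rw [cycleKernel_val_sub_one hx]
    ring

def cycleKernelMatrix (q : K) (N : ℕ) : Matrix (Fin N) (Fin N) K :=
  Matrix.of fun i j => cycleKernel q N (j - i).val

theorem cycleLaplacian_mul_cycleKernelMatrix (hq : q ≠ 0) (n : ℕ) :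
    ((q + q⁻¹) • (1 : Matrix (Fin (n + 3)) (Fin (n + 3)) K)
        - (SimpleGraph.cycleGraph (n + 3)).adjMatrix K) * cycleKernelMatrix q (n + 3)
      = ((q - q⁻¹) * (q ^ (n + 3) - 1)) • 1 := by
  ext i j
  rw [sub_mul, smul_mul, Matrix.one_mul, Matrix.sub_apply, Matrix.smul_apply,
    SimpleGraph.cycleGraph_adjMatrix_mul_apply]
  simp only [cycleKernelMatrix, of_apply, smul_eq_mul, Matrix.smul_apply, one_apply]
  rw [show j - (i - 1) = (j - i) + 1 by abel, show j - (i + 1) = (j - i) - 1 by abel,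
    cycleKernel_second_difference hq, mul_ite, mul_one, mul_zero]
  simp only [sub_eq_zero, eq_comm]

theorem div_add_inv_div_eq_cycleKernel_div (hq : q ≠ 0) (d : ℤ) :
    q ^ d / ((q - q⁻¹) * (q ^ N - 1)) + (q ^ d)⁻¹ / ((q⁻¹ - q) * ((q ^ N)⁻¹ - 1))
      = cycleKernel q N d / ((q - q⁻¹) * (q ^ N - 1)) := by
  have hden : (q⁻¹ - q) * ((q ^ N)⁻¹ - 1) = (q - q⁻¹) * (q ^ N - 1) / q ^ N := by
    field_simp
    ring
  rw [hden, div_div_eq_mul_div, ← add_div, cycleKernel, zpow_sub₀ hq, zpow_natCast,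
    div_eq_inv_mul (q ^ N)]

end CycleKernel

theorem Complex.exp_I_mul_pow_ne_one {θ : ℝ} {k : ℕ}
    (h : ∀ m : ℤ, (k : ℝ) * θ ≠ m * (2 * Real.pi)) : exp (I * θ) ^ k ≠ 1 := by
  rw [← exp_nat_mul, Ne, exp_eq_one_iff]
  rintro ⟨m, hm⟩
  apply h m
  simpa using congrArg im hm

theorem Complex.exp_I_mul_sub_inv_ne_zero {θ : ℝ} (h : ∀ m : ℤ, θ ≠ m * Real.pi) :
    exp (I * θ) - (exp (I * θ))⁻¹ ≠ 0 := by
  have hsq : exp (I * θ) ^ 2 ≠ 1 :=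
    exp_I_mul_pow_ne_one fun m hm => h m (by push_cast at hm; linarith)
  have hq := exp_ne_zero (I * θ)
  rwa [sub_ne_zero, Ne, ← mul_left_inj' hq, inv_mul_cancel₀ hq, ← sq]

theorem Complex.two_cos_ofReal (θ : ℝ) :
    ((2 * Real.cos θ : ℝ) : ℂ) = exp (I * θ) + (exp (I * θ))⁻¹ := by
  rw [← exp_neg, ofReal_mul, ofReal_cos, ofReal_ofNat, two_cos, neg_mul, mul_comm (θ : ℂ)]

theorem Complex.exp_div_add_exp_neg_div_eq_cycleKernel_div (θ : ℝ) (N : ℕ) (d : ℤ) :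
    exp (I * θ * d) / ((exp (I * θ) - exp (-(I * θ))) * (exp (I * θ * N) - 1)) +
        exp (-(I * θ * d)) / ((exp (-(I * θ)) - exp (I * θ)) * (exp (-(I * θ * N)) - 1)) =
      cycleKernel (exp (I * θ)) N d /
        ((exp (I * θ) - (exp (I * θ))⁻¹) * (exp (I * θ) ^ N - 1)) := by
  have hpow (k : ℤ) : exp (I * θ * k) = exp (I * θ) ^ k := by rw [mul_comm, exp_int_mul]
  rw [← Int.cast_natCast N]
  simp only [exp_neg, hpow, zpow_natCast]
  exact div_add_inv_div_eq_cycleKernel_div (exp_ne_zero _) d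

/-- For `α ∉ πℤ` with `Nα ∉ 2πℤ`, the inverse of the generalized simple-cycle Laplacian
`L_{C,α} = 2cos(α)·I - A_C` (over `ℂ`) is the matrix with entries
`e^{iα|n-m|}/((e^{iα}-e^{-iα})(e^{iαN}-1)) + e^{-iα|n-m|}/((e^{-iα}-e^{iα})(e^{-iαN}-1))`. -/
theorem generalized_cycle_laplacian_inverse_formula
    (N : ℕ) (hN : 3 ≤ N) (α : ℝ)
    (hα1 : ∀ m : ℤ, α ≠ m * Real.pi)
    (hα2 : ∀ m : ℤ, (N : ℝ) * α ≠ m * (2 * Real.pi))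
    (A L M : Matrix (Fin N) (Fin N) ℂ)
    (hA : ∀ i j, A i j =
      if j.val = (i.val + 1) % N ∨ i.val = (j.val + 1) % N then 1 else 0)
    (hL : L = ((2 * Real.cos α : ℝ) : ℂ) • (1 : Matrix (Fin N) (Fin N) ℂ) - A)
    (hM : ∀ m n, M m n =
      Complex.exp (Complex.I * (α : ℂ) * ((|(n.val : ℝ) - (m.val : ℝ)| : ℝ) : ℂ)) /
        ((Complex.exp (Complex.I * (α : ℂ)) - Complex.exp (-(Complex.I * (α : ℂ)))) *
          (Complex.exp (Complex.I * (α : ℂ) * (N : ℂ)) - 1)) +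
      Complex.exp (-(Complex.I * (α : ℂ) * ((|(n.val : ℝ) - (m.val : ℝ)| : ℝ) : ℂ))) /
        ((Complex.exp (-(Complex.I * (α : ℂ))) - Complex.exp (Complex.I * (α : ℂ))) *
          (Complex.exp (-(Complex.I * (α : ℂ) * (N : ℂ))) - 1))) :
    L * M = 1 := by
  obtain ⟨n, rfl⟩ : ∃ n, N = n + 3 := ⟨N - 3, by omega⟩
  set q := Complex.exp (Complex.I * α)
  have hD : (q - q⁻¹) * (q ^ (n + 3) - 1) ≠ 0 :=
    mul_ne_zero (Complex.exp_I_mul_sub_inv_ne_zero hα1)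
      (sub_ne_zero.mpr (Complex.exp_I_mul_pow_ne_one hα2))
  have hA' : A = (SimpleGraph.cycleGraph (n + 3)).adjMatrix ℂ :=
    Matrix.ext fun i j => by rw [hA, SimpleGraph.cycleGraph_adjMatrix_apply]
  have hM' : M = ((q - q⁻¹) * (q ^ (n + 3) - 1))⁻¹ • cycleKernelMatrix q (n + 3) := by
    ext i j
    have habs : ((|(j.val : ℝ) - i.val| : ℝ) : ℂ) = ((|(j.val : ℤ) - i.val| : ℤ) : ℂ) := by
      rw [← Complex.ofReal_intCast, Int.cast_abs, Int.cast_sub, Int.cast_natCast,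
        Int.cast_natCast]
    rw [hM, habs, Complex.exp_div_add_exp_neg_div_eq_cycleKernel_div, cycleKernel_abs_sub,
      Matrix.smul_apply, cycleKernelMatrix, of_apply, smul_eq_mul, div_eq_inv_mul]
  rw [hL, Complex.two_cos_ofReal, hA', hM', mul_smul_comm,
    cycleLaplacian_mul_cycleKernelMatrix (Complex.exp_ne_zero _), smul_smul, inv_mul_cancel₀ hD,
    one_smul]
end

section
/- Let N ≥ 4 be even and let L_{C,π} = −2·I_N − A_C, where A_C is the adjacency matrix of the unweighted simple cycle on N vertices. Define M ∈ ℝ^{N×N} by M_{mn} = (−1)^{|n−m|+1}·[ (n−m)²/(2N) − |n−m|/2 + (N²−1)/(12N) ] for 0 ≤ m,n ≤ N−1, and define K ∈ ℝ^{N×N} by K_{mn} = (−1)^{n−m}. Then L_{C,π}·M = M·L_{C,π} = I_N − (1/N)·K and M·K = K·M = 0; consequently M is the Moore–Penrose pseudoinverse of L_{C,π}, and its entries equal (−1)^{|n−m|+1} times the entries of the Moore–Penrose pseudoinverse of the ordinary cycle Laplacian L_C. -/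
/-!
Conjugation by the diagonal sign matrix `D = diag((-1)^i)` reduces everything to the ordinary
cycle. Since `N` is even, adjacent vertices have opposite parity, so `D A_C D = -A_C` and
`D L_{C,π} D = -L_C`; likewise `D M D = -G` for the Green's function `G` of the cycle, and
`D J D = K` for the all-ones matrix `J`. On the cycle, `g(x) = x²/(2N) - x/2 + (N²-1)/(12N)` has
constant second difference `1/N`, satisfies `g(N - x) = g(x)` and sums to zero over a period,
whence `L_C G = G L_C = I - J/N` and `G J = 0`. A matrix that inverts `A` up to a symmetric
projection onto a common kernel satisfies the four Penrose equations, and these determine the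
pseudoinverse.
-/

open Matrix Finset SimpleGraph

namespace Matrix

variable {m n R : Type*} [Fintype m] [Fintype n] [CommRing R]

structure IsMoorePenroseInverse (A : Matrix m n R) (B : Matrix n m R) : Prop where
  penrose₁ : A * B * A = A
  penrose₂ : B * A * B = B
  penrose₃ : (A * B)ᵀ = A * B
  penrose₄ : (B * A)ᵀ = B * A

theorem IsMoorePenroseInverse.unique {A : Matrix m n R} {B C : Matrix n m R}
    (hB : IsMoorePenroseInverse A B) (hC : IsMoorePenroseInverse A C) : B = C := by
  have hAB : A * B = A * C := calc
    A * B = (A * C * (A * B))ᵀ := by rw [← Matrix.mul_assoc, hC.penrose₁, hB.penrose₃]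
    _ = A * B * A * C := by
      rw [transpose_mul, hB.penrose₃, hC.penrose₃, Matrix.mul_assoc (A * B)]
    _ = A * C := by rw [hB.penrose₁]
  have hBA : B * A = C * A := calc
    B * A = (B * A * (C * A))ᵀ := by
      rw [Matrix.mul_assoc B, ← Matrix.mul_assoc A, hC.penrose₁, hB.penrose₄]
    _ = C * (A * B * A) := by
      rw [transpose_mul, hB.penrose₄, hC.penrose₄, Matrix.mul_assoc C, Matrix.mul_assoc A]
    _ = C * A := by rw [hB.penrose₁]
  calc B = B * A * B := hB.penrose₂.symm
    _ = C * A * C := by rw [hBA, Matrix.mul_assoc, hAB, ← Matrix.mul_assoc]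
    _ = C := hC.penrose₂

variable [DecidableEq n]

/-- `c • K` plays the role of the projection onto the common kernel of `A` and `B`. -/
structure IsInverseOffKernel (A B K : Matrix n n R) (c : R) : Prop where
  mul_right : A * B = 1 - c • K
  mul_left : B * A = 1 - c • K
  mul_kernel : B * K = 0
  kernel_mul : K * B = 0
  kernel_mul_self : K * A = 0
  transpose_kernel : Kᵀ = K

namespace IsInverseOffKernel

variable {A B K : Matrix n n R} {c : R}

theorem isMoorePenroseInverse (h : IsInverseOffKernel A B K c) : IsMoorePenroseInverse A B where
  penrose₁ := by
    rw [h.mul_right, Matrix.sub_mul, Matrix.one_mul, smul_mul, h.kernel_mul_self, smul_zero,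
      sub_zero]
  penrose₂ := by
    rw [h.mul_left, Matrix.sub_mul, Matrix.one_mul, smul_mul, h.kernel_mul, smul_zero, sub_zero]
  penrose₃ := by rw [h.mul_right, transpose_sub, transpose_one, transpose_smul, h.transpose_kernel]
  penrose₄ := by rw [h.mul_left, transpose_sub, transpose_one, transpose_smul, h.transpose_kernel]

theorem neg (h : IsInverseOffKernel A B K c) : IsInverseOffKernel (-A) (-B) K c where
  mul_right := by rw [neg_mul_neg, h.mul_right]
  mul_left := by rw [neg_mul_neg, h.mul_left]
  mul_kernel := by rw [Matrix.neg_mul, h.mul_kernel, neg_zero]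
  kernel_mul := by rw [Matrix.mul_neg, h.kernel_mul, neg_zero]
  kernel_mul_self := by rw [Matrix.mul_neg, h.kernel_mul_self, neg_zero]
  transpose_kernel := h.transpose_kernel

theorem conj (h : IsInverseOffKernel A B K c) {D : Matrix n n R} (hD : D * D = 1)
    (hDT : Dᵀ = D) : IsInverseOffKernel (D * A * D) (D * B * D) (D * K * D) c := by
  have conj_mul_conj (X Y : Matrix n n R) : D * X * D * (D * Y * D) = D * (X * Y) * D := by
    simp only [Matrix.mul_assoc, ← Matrix.mul_assoc D D, hD, Matrix.one_mul]
  have conj_one_sub_smul : D * (1 - c • K) * D = 1 - c • (D * K * D) := by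
    rw [Matrix.mul_sub, Matrix.sub_mul, Matrix.mul_one, hD, Matrix.mul_smul, smul_mul]
  refine ⟨?_, ?_, ?_, ?_, ?_, ?_⟩
  · rw [conj_mul_conj, h.mul_right, conj_one_sub_smul]
  · rw [conj_mul_conj, h.mul_left, conj_one_sub_smul]
  · rw [conj_mul_conj, h.mul_kernel, Matrix.mul_zero, Matrix.zero_mul]
  · rw [conj_mul_conj, h.kernel_mul, Matrix.mul_zero, Matrix.zero_mul]
  · rw [conj_mul_conj, h.kernel_mul_self, Matrix.mul_zero, Matrix.zero_mul]
  · rw [transpose_mul, transpose_mul, hDT, h.transpose_kernel, Matrix.mul_assoc]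

end IsInverseOffKernel

end Matrix

noncomputable def cycleGreen (N : ℕ) (x : ℝ) : ℝ :=
  x ^ 2 / (2 * N) - x / 2 + ((N : ℝ) ^ 2 - 1) / (12 * N)

section cycleGreen

variable {N : ℕ}

theorem cycleGreen_sub_left (hN : N ≠ 0) (x : ℝ) : cycleGreen N (N - x) = cycleGreen N x := by
  unfold cycleGreen
  field_simp
  ring

theorem cycleGreen_second_diff (hN : N ≠ 0) (x : ℝ) :
    2 * cycleGreen N x - cycleGreen N (x - 1) - cycleGreen N (x + 1) = -(N : ℝ)⁻¹ := by
  unfold cycleGreen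
  field_simp
  ring

theorem sum_range_cycleGreen (hN : N ≠ 0) : ∑ x ∈ range N, cycleGreen N x = 0 := by
  have partial_sum (n : ℕ) : ∑ x ∈ range n, cycleGreen N x =
      n * (n - 1) * (2 * n - 1) / (12 * N) - n * (n - 1) / 4
        + n * ((N : ℝ) ^ 2 - 1) / (12 * N) := by
    induction n with
    | zero => simp
    | succ n ih =>
      rw [sum_range_succ, ih]
      unfold cycleGreen
      push_cast
      ring
  rw [partial_sum]
  field_simp
  ring

theorem cycleGreen_val_sub (m n : Fin N) :
    cycleGreen N (n - m : Fin N) =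
      ((n : ℝ) - m) ^ 2 / (2 * N) - (((n : ℤ) - m).natAbs : ℝ) / 2
        + ((N : ℝ) ^ 2 - 1) / (12 * N) := by
  have hN : (N : ℝ) ≠ 0 := Nat.cast_ne_zero.mpr m.pos.ne'
  rw [Nat.cast_natAbs, Int.cast_abs, Int.cast_sub, Int.cast_natCast, Int.cast_natCast]
  rcases le_or_gt m n with h | h
  · have h' : (m : ℝ) ≤ n := Nat.cast_le.mpr h
    rw [Fin.coe_sub_iff_le.mpr h, Nat.cast_sub h, abs_of_nonneg (sub_nonneg.mpr h')]
    unfold cycleGreen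
    ring
  · have h' : (n : ℝ) < m := Nat.cast_lt.mpr h
    rw [Fin.coe_sub_iff_lt.mpr h, Nat.cast_sub (by omega), Nat.cast_add,
      abs_of_neg (sub_neg.mpr h')]
    unfold cycleGreen
    field_simp
    ring

variable [NeZero N]

theorem cycleGreen_val_neg (r : Fin N) : cycleGreen N (-r : Fin N) = cycleGreen N r := by
  rcases eq_or_ne r 0 with rfl | hr
  · rw [neg_zero]
  · have hr' : (r : ℕ) ≠ 0 := Fin.val_ne_zero_iff.mpr hr
    rw [Fin.val_neg', Nat.mod_eq_of_lt (by omega), Nat.cast_sub r.isLt.le,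
      cycleGreen_sub_left (NeZero.ne N)]

theorem cycleGreen_val_add_one (r : Fin N) :
    cycleGreen N (r + 1 : Fin N) = cycleGreen N (r + 1) := by
  rcases lt_or_eq_of_le (Nat.add_one_le_of_lt r.isLt) with hr | hr
  · rw [Fin.val_add_one_of_lt' hr, Nat.cast_succ]
  · have hr0 : r + 1 = 0 := by
      ext
      rw [Fin.val_add, Fin.val_one', Nat.add_mod_mod, hr, Nat.mod_self, Fin.val_zero]
    have hr' : (r : ℝ) + 1 = N := by exact_mod_cast hr
    rw [hr0, hr', Fin.val_zero, Nat.cast_zero, ← sub_self (N : ℝ),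
      cycleGreen_sub_left (NeZero.ne N)]

theorem cycleGreen_val_second_diff (hN : 2 ≤ N) (r : Fin N) :
    2 * cycleGreen N r - cycleGreen N (r - 1 : Fin N) - cycleGreen N (r + 1 : Fin N) =
      (if r = 0 then 1 else 0) - (N : ℝ)⁻¹ := by
  have hN0 : N ≠ 0 := NeZero.ne N
  rw [cycleGreen_val_add_one]
  rcases eq_or_ne r 0 with rfl | hr
  · have hone : ((1 : Fin N) : ℕ) = 1 := by rw [Fin.val_one', Nat.mod_eq_of_lt hN]
    rw [zero_sub, cycleGreen_val_neg, hone, if_pos rfl, Fin.val_zero]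
    unfold cycleGreen
    field_simp
    ring
  · rw [Fin.val_sub_one_of_ne_zero hr, Nat.cast_sub (Nat.one_le_iff_ne_zero.mpr
      (Fin.val_ne_zero_iff.mpr hr)), if_neg hr, zero_sub, Nat.cast_one]
    exact cycleGreen_second_diff hN0 _

end cycleGreen

namespace SimpleGraph

variable {N : ℕ}

theorem cycleGraph_degree (hN : 3 ≤ N) (i : Fin N) : (cycleGraph N).degree i = 2 := by
  obtain ⟨n, rfl⟩ : ∃ n, N = n + 3 := ⟨N - 3, by omega⟩
  exact cycleGraph_degree_three_le

theorem cycleGraph_adj_iff [NeZero N] (hN : 2 ≤ N) {i j : Fin N} :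
    (cycleGraph N).Adj i j ↔ j = i - 1 ∨ j = i + 1 := by
  obtain ⟨n, rfl⟩ : ∃ n, N = n + 2 := ⟨N - 2, by omega⟩
  rw [← mem_neighborSet, cycleGraph_neighborSet, Set.mem_insert_iff, Set.mem_singleton_iff]

theorem cycleGraph_adj_iff_val (hN : 2 ≤ N) {i j : Fin N} :
    (cycleGraph N).Adj i j ↔ (j : ℕ) = (i + 1) % N ∨ (i : ℕ) = (j + 1) % N := by
  have : NeZero N := ⟨by omega⟩
  have val_add_one (k : Fin N) : ((k + 1 : Fin N) : ℕ) = (k + 1) % N := by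
    rw [Fin.val_add, Fin.val_one', Nat.add_mod_mod]
  rw [cycleGraph_adj_iff hN, eq_sub_iff_add_eq, Fin.ext_iff, Fin.ext_iff, val_add_one,
    val_add_one, or_comm, eq_comm (a := ((j : ℕ) + 1) % N)]

theorem cycleGraph_adjMatrix_apply_s15 (hN : 2 ≤ N) (i j : Fin N) :
    (cycleGraph N).adjMatrix ℝ i j =
      if (j : ℕ) = (i + 1) % N ∨ (i : ℕ) = (j + 1) % N then 1 else 0 := by
  simp only [adjMatrix_apply, cycleGraph_adj_iff_val hN]

theorem cycleGraph_lapMatrix_apply (hN : 3 ≤ N) (i j : Fin N) :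
    (cycleGraph N).lapMatrix ℝ i j =
      if i = j then 2 else if (j : ℕ) = (i + 1) % N ∨ (i : ℕ) = (j + 1) % N then -1 else 0 := by
  rw [lapMatrix, Matrix.sub_apply, adjMatrix_apply]
  rcases eq_or_ne i j with rfl | hij
  · simp [degMatrix, cycleGraph_degree hN]
  · simp only [if_neg hij, degMatrix, Matrix.diagonal_apply_ne _ hij,
      cycleGraph_adj_iff_val (N := N) (by omega)]
    split_ifs <;> norm_num

theorem cycleGraph_lapMatrix_mulVec_apply [NeZero N] (hN : 3 ≤ N) (v : Fin N → ℝ) (i : Fin N) :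
    ((cycleGraph N).lapMatrix ℝ *ᵥ v) i = 2 * v i - v (i - 1) - v (i + 1) := by
  obtain ⟨n, rfl⟩ : ∃ n, N = n + 3 := ⟨N - 3, by omega⟩
  have hne : i - 1 ≠ i + 1 := by
    rw [Ne, sub_eq_iff_eq_add, add_assoc, left_eq_add]
    exact ne_of_beq_false rfl
  rw [lapMatrix_mulVec_apply, cycleGraph_degree_three_le, cycleGraph_neighborFinset,
    sum_pair hne]
  push_cast
  ring

end SimpleGraph

/-- Indexing by the cyclic offset `j - i` rather than by `|j - i|` is harmless because
`cycleGreen N (N - x) = cycleGreen N x`. -/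
noncomputable def cycleGreenMatrix (N : ℕ) : Matrix (Fin N) (Fin N) ℝ :=
  of fun i j => cycleGreen N (j - i : Fin N)

section cycleGreenMatrix

variable {N : ℕ} [NeZero N]

theorem transpose_cycleGreenMatrix : (cycleGreenMatrix N)ᵀ = cycleGreenMatrix N := by
  ext i j
  rw [transpose_apply, cycleGreenMatrix, of_apply, of_apply, ← neg_sub, cycleGreen_val_neg]

theorem cycleGreenMatrix_mul_of_one : cycleGreenMatrix N * of 1 = 0 := by
  ext i j
  rw [mul_apply, Matrix.zero_apply]
  simp only [cycleGreenMatrix, of_apply, Pi.one_apply, mul_one]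
  rw [Fintype.sum_equiv (Equiv.subRight i) (fun k => cycleGreen N (k - i : Fin N))
      (fun k => cycleGreen N k) fun _ => rfl,
    Fin.sum_univ_eq_sum_range (cycleGreen N ·), sum_range_cycleGreen (NeZero.ne N)]

theorem cycleGraph_lapMatrix_mul_cycleGreenMatrix (hN : 3 ≤ N) :
    (cycleGraph N).lapMatrix ℝ * cycleGreenMatrix N = 1 - (N : ℝ)⁻¹ • of 1 := by
  ext i j
  change ((cycleGraph N).lapMatrix ℝ *ᵥ fun k => cycleGreenMatrix N k j) i = _
  rw [cycleGraph_lapMatrix_mulVec_apply hN]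
  have sub_sub_one : j - (i - 1) = j - i + 1 := by abel
  have sub_add_one : j - (i + 1) = j - i - 1 := by abel
  simp only [cycleGreenMatrix, of_apply]
  rw [sub_sub_one, sub_add_one, sub_right_comm, cycleGreen_val_second_diff (by omega),
    Matrix.sub_apply, one_apply, Matrix.smul_apply, of_apply, Pi.one_apply, Pi.one_apply,
    smul_eq_mul, mul_one]
  simp_rw [sub_eq_zero, eq_comm (a := j)]

theorem cycleGraph_lapMatrix_isInverseOffKernel (hN : 3 ≤ N) :
    IsInverseOffKernel ((cycleGraph N).lapMatrix ℝ) (cycleGreenMatrix N) (of 1) (N : ℝ)⁻¹ := by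
  have transpose_of_one : (of 1 : Matrix (Fin N) (Fin N) ℝ)ᵀ = of 1 := rfl
  have hL : ((cycleGraph N).lapMatrix ℝ)ᵀ = (cycleGraph N).lapMatrix ℝ :=
    ((cycleGraph N).isSymm_lapMatrix ℝ).eq
  have hLG := cycleGraph_lapMatrix_mul_cycleGreenMatrix hN
  have hGJ : cycleGreenMatrix N * of 1 = 0 := cycleGreenMatrix_mul_of_one
  have hLJ : (cycleGraph N).lapMatrix ℝ * of 1 = 0 := by
    ext i j
    exact congrFun (lapMatrix_mulVec_const_eq_zero (cycleGraph N)) i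
  refine ⟨hLG, ?_, hGJ, ?_, ?_, transpose_of_one⟩
  · rw [← transpose_cycleGreenMatrix, ← hL, ← transpose_mul, hLG, transpose_sub, transpose_one,
      transpose_smul, transpose_of_one]
  · rw [← transpose_of_one, ← transpose_cycleGreenMatrix, ← transpose_mul, hGJ, transpose_zero]
  · rw [← transpose_of_one, ← hL, ← transpose_mul, hLJ, transpose_zero]

end cycleGreenMatrix

section altSign

theorem neg_one_zpow_natCast_sub {R : Type*} [Field R] (a b : ℕ) :
    (-1 : R) ^ ((b : ℤ) - a) = (-1) ^ a * (-1) ^ b := by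
  rw [zpow_sub₀ (neg_ne_zero.mpr one_ne_zero), zpow_natCast, zpow_natCast, div_eq_inv_mul,
    ← inv_pow, inv_neg_one]

theorem neg_one_pow_natAbs_natCast_sub_add_one {R : Type*} [Field R] (a b : ℕ) :
    (-1 : R) ^ (((b : ℤ) - a).natAbs + 1) = -((-1) ^ a * (-1) ^ b) := by
  have neg_one_pow_natAbs (z : ℤ) : (-1 : R) ^ z.natAbs = (-1) ^ z := by
    simp only [neg_one_pow_eq_ite, neg_one_zpow_eq_ite, Int.natAbs_even]
  rw [pow_succ, neg_one_pow_natAbs, neg_one_zpow_natCast_sub, mul_neg_one]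

def altSign (N : ℕ) : Matrix (Fin N) (Fin N) ℝ := diagonal fun i => (-1) ^ (i : ℕ)

variable {N : ℕ}

theorem altSign_mul_self : altSign N * altSign N = 1 := by
  rw [altSign, diagonal_mul_diagonal, ← diagonal_one]
  congr
  funext i
  rw [← mul_pow, neg_one_mul, neg_neg, one_pow]

theorem transpose_altSign : (altSign N)ᵀ = altSign N := diagonal_transpose _

theorem altSign_conj_apply (X : Matrix (Fin N) (Fin N) ℝ) (i j : Fin N) :
    (altSign N * X * altSign N) i j = (-1) ^ (i : ℕ) * X i j * (-1) ^ (j : ℕ) := by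
  rw [altSign, mul_diagonal, diagonal_mul]

theorem altSign_conj_of_one :
    altSign N * of 1 * altSign N = of fun m n : Fin N => (-1 : ℝ) ^ ((n.val : ℤ) - m.val) := by
  ext m n
  rw [altSign_conj_apply, of_apply, of_apply, neg_one_zpow_natCast_sub, Pi.one_apply,
    Pi.one_apply, mul_one]

theorem neg_altSign_conj_cycleGreenMatrix :
    -(altSign N * cycleGreenMatrix N * altSign N) =
      of fun m n : Fin N =>
        (-1 : ℝ) ^ (((n.val : ℤ) - m.val).natAbs + 1) * cycleGreenMatrix N m n := by
  ext m n
  rw [Matrix.neg_apply, altSign_conj_apply, of_apply, neg_one_pow_natAbs_natCast_sub_add_one]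
  ring

theorem neg_one_pow_val_add_one [NeZero N] (hN : Even N) (i : Fin N) :
    (-1 : ℝ) ^ ((i + 1 : Fin N) : ℕ) = -(-1) ^ (i : ℕ) := by
  rw [Fin.val_add, Fin.val_one', Nat.add_mod_mod, neg_one_pow_eq_pow_mod_two,
    Nat.mod_mod_of_dvd _ (even_iff_two_dvd.mp hN), ← neg_one_pow_eq_pow_mod_two, pow_succ,
    mul_neg_one]

theorem altSign_conj_cycleGraph_adjMatrix (hN : Even N) :
    altSign N * (cycleGraph N).adjMatrix ℝ * altSign N = -(cycleGraph N).adjMatrix ℝ := by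
  ext i j
  have : NeZero N := ⟨i.pos.ne'⟩
  have hN2 : 2 ≤ N := by obtain ⟨k, hk⟩ := hN; have := i.pos; omega
  have sign_mul_sign_add_one (k : Fin N) :
      (-1 : ℝ) ^ (k : ℕ) * (-1) ^ ((k + 1 : Fin N) : ℕ) = -1 := by
    rw [neg_one_pow_val_add_one hN, mul_neg, ← mul_pow, neg_one_mul, neg_neg, one_pow]
  rw [altSign_conj_apply, Matrix.neg_apply, adjMatrix_apply]
  split_ifs with h
  · rcases (cycleGraph_adj_iff hN2).mp h with rfl | rfl
    · have := sign_mul_sign_add_one (i - 1)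
      rw [sub_add_cancel] at this
      rw [mul_one, mul_comm, this]
    · rw [mul_one, sign_mul_sign_add_one]
  · rw [mul_zero, zero_mul, neg_zero]

theorem altSign_conj_cycleGraph_lapMatrix (hN3 : 3 ≤ N) (hN : Even N) :
    altSign N * (cycleGraph N).lapMatrix ℝ * altSign N =
      (2 : ℝ) • 1 + (cycleGraph N).adjMatrix ℝ := by
  have hdeg : (cycleGraph N).degMatrix ℝ = (2 : ℝ) • 1 := by
    rw [degMatrix, smul_one_eq_diagonal]
    congr
    funext i
    rw [cycleGraph_degree hN3]
    norm_num
  rw [lapMatrix, hdeg, Matrix.mul_sub, Matrix.sub_mul, Matrix.mul_smul, Matrix.mul_one, smul_mul,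
    altSign_mul_self, altSign_conj_cycleGraph_adjMatrix hN, sub_neg_eq_add]

end altSign

/-- For even `N ≥ 4`, the matrix `M` with entries
`(-1)^{|n-m|+1}·[(n-m)²/(2N) - |n-m|/2 + (N²-1)/(12N)]` satisfies
`L_{C,π}·M = M·L_{C,π} = I - (1/N)·K` and `M·K = K·M = 0`, where
`L_{C,π} = -2·I - A_C` and `K_{mn} = (-1)^{n-m}`; consequently `M` is the Moore–Penrose
pseudoinverse of `L_{C,π}`, and its entries equal `(-1)^{|n-m|+1}` times the entries of
the Moore–Penrose pseudoinverse of the ordinary cycle Laplacian `L_C`. -/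
theorem cycle_laplacian_pi_pseudoinverse_formula
    (N : ℕ) (hN : 4 ≤ N) (hNeven : Even N)
    (A L M K LC : Matrix (Fin N) (Fin N) ℝ)
    (hA : ∀ i j, A i j =
      if j.val = (i.val + 1) % N ∨ i.val = (j.val + 1) % N then 1 else 0)
    (hL : L = (-2 : ℝ) • (1 : Matrix (Fin N) (Fin N) ℝ) - A)
    (hM : ∀ m n, M m n =
      (-1 : ℝ) ^ ((((n.val : ℤ) - (m.val : ℤ)).natAbs) + 1) *
        (((n.val : ℝ) - (m.val : ℝ)) ^ 2 / (2 * N)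
          - ((((n.val : ℤ) - (m.val : ℤ)).natAbs : ℝ)) / 2
          + ((N : ℝ) ^ 2 - 1) / (12 * N)))
    (hK : ∀ m n, K m n = (-1 : ℝ) ^ ((n.val : ℤ) - (m.val : ℤ)))
    (hLC : ∀ i j, LC i j =
      if i = j then 2
      else if j.val = (i.val + 1) % N ∨ i.val = (j.val + 1) % N then -1 else 0) :
    L * M = 1 - ((N : ℝ))⁻¹ • K ∧
    M * L = 1 - ((N : ℝ))⁻¹ • K ∧
    M * K = 0 ∧ K * M = 0 ∧
    L * M * L = L ∧ M * L * M = M ∧ (L * M)ᵀ = L * M ∧ (M * L)ᵀ = M * L ∧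
    (∀ MC : Matrix (Fin N) (Fin N) ℝ,
      LC * MC * LC = LC → MC * LC * MC = MC →
      (LC * MC)ᵀ = LC * MC → (MC * LC)ᵀ = MC * LC →
      ∀ m n, M m n = (-1 : ℝ) ^ ((((n.val : ℤ) - (m.val : ℤ)).natAbs) + 1) * MC m n) := by
  have : NeZero N := ⟨by omega⟩
  have hA' : A = (cycleGraph N).adjMatrix ℝ :=
    Matrix.ext fun i j => (hA i j).trans (cycleGraph_adjMatrix_apply_s15 (by omega) i j).symm
  have hLC' : LC = (cycleGraph N).lapMatrix ℝ :=
    Matrix.ext fun i j => (hLC i j).trans (cycleGraph_lapMatrix_apply (by omega) i j).symm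
  have hMG (m n : Fin N) : M m n =
      (-1 : ℝ) ^ ((((n.val : ℤ) - (m.val : ℤ)).natAbs) + 1) * cycleGreenMatrix N m n := by
    rw [hM, cycleGreenMatrix, of_apply, cycleGreen_val_sub]
  have hG : IsInverseOffKernel LC (cycleGreenMatrix N) (of 1) (N : ℝ)⁻¹ :=
    hLC' ▸ cycleGraph_lapMatrix_isInverseOffKernel (by omega)
  have hL' : L = -(altSign N * LC * altSign N) := by
    rw [hL, hLC', altSign_conj_cycleGraph_lapMatrix (by omega) hNeven, hA', neg_add, neg_smul,
      sub_eq_add_neg]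
  have hM' : M = -(altSign N * cycleGreenMatrix N * altSign N) := by
    rw [neg_altSign_conj_cycleGreenMatrix]
    exact Matrix.ext hMG
  have hK' : K = altSign N * of 1 * altSign N := by
    rw [altSign_conj_of_one]
    exact Matrix.ext hK
  have hLMK : IsInverseOffKernel L M K (N : ℝ)⁻¹ := by
    rw [hL', hM', hK']
    exact (hG.conj altSign_mul_self transpose_altSign).neg
  obtain ⟨p₁, p₂, p₃, p₄⟩ := hLMK.isMoorePenroseInverse
  refine ⟨hLMK.mul_right, hLMK.mul_left, hLMK.mul_kernel, hLMK.kernel_mul, p₁, p₂, p₃, p₄,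
    fun MC h₁ h₂ h₃ h₄ m n => ?_⟩
  rw [hMG, hG.isMoorePenroseInverse.unique ⟨h₁, h₂, h₃, h₄⟩]
end

section
/- Let N ≥ 3, let M be an integer with 1 ≤ M < N/2, let d_1,…,d_M ∈ ℝ, and let α ∈ ℝ. Let A be the N×N symmetric circulant adjacency matrix with entries d_j at offsets ±j (mod N) for 1 ≤ j ≤ M and 0 otherwise, let d_α = ∑_{j=1}^M 2 d_j cos(αj), and let L_α = d_α·I_N − A. Let L_{C,α} = 2cos(α)·I_N − A_C be the generalized simple-cycle Laplacian. For t ≥ 0 define r_t = ∑_{m=0}^{t} cos(α(2m − t)), and let P_α be the N×N symmetric circulant matrix whose first row has entry ∑_{j=1}^M d_j·r_{j−1} at position 0, entry ∑_{j=s+1}^M d_j·r_{j−1−s} at positions s and N−s for 1 ≤ s ≤ M−1, and 0 elsewhere. Then L_α = L_{C,α}·P_α. -/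
open Matrix

private def pfun (N M : ℕ) (d r : ℕ → ℝ) : ℕ → ℝ := fun s =>
  if s = 0 then ∑ t ∈ Finset.Icc 1 M, d t * r (t - 1)
  else if s ≤ M - 1 then ∑ t ∈ Finset.Icc (s + 1) M, d t * r (t - 1 - s)
  else if N - s ≤ M - 1 then ∑ t ∈ Finset.Icc (N - s + 1) M, d t * r (t - 1 - (N - s))
  else 0

private lemma raux0 (α : ℝ) (r : ℕ → ℝ)
    (hr : ∀ t, r t = ∑ m ∈ Finset.range (t + 1), Real.cos (α * (2 * (m : ℝ) - (t : ℝ)))) :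
    r 0 = 1 := by
  rw [hr]; norm_num

private lemma raux1 (α : ℝ) (r : ℕ → ℝ)
    (hr : ∀ t, r t = ∑ m ∈ Finset.range (t + 1), Real.cos (α * (2 * (m : ℝ) - (t : ℝ)))) :
    r 1 = 2 * Real.cos α := by
  rw [hr, Finset.sum_range_succ, Finset.sum_range_one]
  norm_num
  ring

private lemma rauxrec (α : ℝ) (r : ℕ → ℝ)
    (hr : ∀ t, r t = ∑ m ∈ Finset.range (t + 1), Real.cos (α * (2 * (m : ℝ) - (t : ℝ)))) :
    ∀ t, r (t+2) + r t = 2 * Real.cos α * r (t+1) := by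
  intro t
  have key : ∀ x y : ℝ, Real.cos (x + y) + Real.cos (x - y) = 2 * Real.cos y * Real.cos x := by
    intro x y; rw [Real.cos_add, Real.cos_sub]; ring
  rw [hr (t+2), hr t, hr (t+1), Finset.mul_sum]
  have e1 : ∀ m : ℕ, 2 * Real.cos α * Real.cos (α * (2 * (m:ℝ) - (((t+1 : ℕ)):ℝ)))
      = Real.cos (α * (2 * (m:ℝ) - (t:ℝ))) + Real.cos (α * (2 * (m:ℝ) - (((t+2 : ℕ)):ℝ))) := by
    intro m
    have h := key (α * (2 * (m:ℝ) - ((t:ℝ)+1))) α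
    push_cast
    rw [show α * (2 * (m:ℝ) - ((t:ℝ)+1)) + α = α * (2 * (m:ℝ) - (t:ℝ)) by ring,
        show α * (2 * (m:ℝ) - ((t:ℝ)+1)) - α = α * (2 * (m:ℝ) - ((t:ℝ)+2)) by ring] at h
    linarith [h]
  rw [Finset.sum_congr rfl (fun m _ => e1 m), Finset.sum_add_distrib]
  rw [show t+2+1 = (t+2)+1 from rfl,
    Finset.sum_range_succ (fun m => Real.cos (α * (2 * (m:ℝ) - (((t+2:ℕ)):ℝ)))) (t+2)]
  rw [show t+1+1 = (t+1)+1 from rfl,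
    Finset.sum_range_succ (fun m => Real.cos (α * (2 * (m:ℝ) - ((t:ℕ):ℝ)))) (t+1)]
  have : Real.cos (α * (2 * (((t+2:ℕ)):ℝ) - (((t+2:ℕ)):ℝ)))
      = Real.cos (α * (2 * (((t+1:ℕ)):ℝ) - ((t:ℕ):ℝ))) := by
    push_cast; ring_nf
  rw [this]
  ring

private lemma rauxdiff (α : ℝ) (r : ℕ → ℝ)
    (hr : ∀ t, r t = ∑ m ∈ Finset.range (t + 1), Real.cos (α * (2 * (m : ℝ) - (t : ℝ)))) :
    ∀ t, r (t+2) - r t = 2 * Real.cos (α * ((t:ℝ)+2)) := by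
  intro t
  rw [hr (t+2), hr t]
  rw [show t+2+1 = (t+2)+1 from rfl,
    Finset.sum_range_succ (fun m => Real.cos (α * (2 * (m:ℝ) - (((t+2:ℕ)):ℝ)))) (t+2),
    Finset.sum_range_succ' (fun m => Real.cos (α * (2 * (m:ℝ) - (((t+2:ℕ)):ℝ)))) (t+1)]
  have e1 : ∀ m : ℕ, Real.cos (α * (2 * (((m+1:ℕ)):ℝ) - (((t+2:ℕ)):ℝ)))
      = Real.cos (α * (2 * (m:ℝ) - ((t:ℕ):ℝ))) := by
    intro m; push_cast; ring_nf
  rw [Finset.sum_congr rfl (fun m _ => e1 m)]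
  have e2 : Real.cos (α * (2 * ((0:ℕ):ℝ) - (((t+2:ℕ)):ℝ))) = Real.cos (α * ((t:ℝ)+2)) := by
    push_cast
    rw [show α * (2 * (0:ℝ) - ((t:ℝ)+2)) = -(α * ((t:ℝ)+2)) by ring, Real.cos_neg]
  have e3 : Real.cos (α * (2 * (((t+2:ℕ)):ℝ) - (((t+2:ℕ)):ℝ))) = Real.cos (α * ((t:ℝ)+2)) := by
    push_cast; ring_nf
  rw [e2, e3]
  ring

private lemma pfun_symm (N M : ℕ) (d r : ℕ → ℝ) (hN : 3 ≤ N) (hM1 : 1 ≤ M) (hM2 : 2 * M < N) :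
    ∀ s, 0 < s → s < N → pfun N M d r (N - s) = pfun N M d r s := by
  intro s hs1 hs2
  have hNs : N - (N - s) = s := by omega
  unfold pfun
  rw [hNs]
  split_ifs <;> first | rfl | omega

private lemma pfun_zero_mid (N M : ℕ) (d r : ℕ → ℝ) (hM1 : 1 ≤ M) (hM2 : 2 * M < N) :
    ∀ s, M ≤ s → s ≤ N - M → pfun N M d r s = 0 := by
  intro s h1 h2
  unfold pfun
  rw [if_neg (by omega), if_neg (by omega), if_neg (by omega)]

private lemma pfun_val (N M : ℕ) (d r : ℕ → ℝ) (hM1 : 1 ≤ M) (hM2 : 2 * M < N) :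
    ∀ u, u ≤ M + 1 → pfun N M d r u = ∑ t ∈ Finset.Icc (u + 1) M, d t * r (t - 1 - u) := by
  intro u h2
  unfold pfun
  rcases Nat.eq_zero_or_pos u with h | h
  · subst h; rw [if_pos rfl]; norm_num
  rw [if_neg (by omega)]
  rcases le_or_gt u (M - 1) with h3 | h3
  · rw [if_pos h3]
  · rw [if_neg (by omega), if_neg (by omega), Finset.Icc_eq_empty (by omega), Finset.sum_empty]

private lemma pfun_mid (N M : ℕ) (d r : ℕ → ℝ) (α : ℝ) (hM1 : 1 ≤ M) (hM2 : 2 * M < N)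
    (hr0 : r 0 = 1) (hr1 : r 1 = 2 * Real.cos α)
    (hrrec : ∀ t, r (t+2) + r t = 2 * Real.cos α * r (t+1)) :
    ∀ u, 1 ≤ u → u ≤ M →
      2 * Real.cos α * pfun N M d r u - pfun N M d r (u - 1) - pfun N M d r (u + 1)
        = - d u := by
  intro u h1 h2
  rw [pfun_val N M d r hM1 hM2 u (by omega),
      pfun_val N M d r hM1 hM2 (u-1) (by omega),
      pfun_val N M d r hM1 hM2 (u+1) (by omega)]
  rw [show u - 1 + 1 = u by omega]
  simp only [show ∀ t : ℕ, t - 1 - (u - 1) = t - u from fun t => by omega,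
             show ∀ t : ℕ, t - 1 - (u + 1) = t - (u + 2) from fun t => by omega]
  have hins : Finset.Icc u M = insert u (Finset.Icc (u+1) M) := by
    ext x; simp [Finset.mem_Icc]; omega
  rw [hins, Finset.sum_insert (by simp)]
  rw [show u - u = 0 by omega, hr0]
  have key : ∑ t ∈ Finset.Icc (u+1) M, (2 * Real.cos α * (d t * r (t-1-u)) - d t * r (t-u))
      = ∑ t ∈ Finset.Icc (u+2) M, d t * r (t-(u+2)) := by
    rcases le_or_gt (u+1) M with h | h
    · have hins2 : Finset.Icc (u+1) M = insert (u+1) (Finset.Icc (u+2) M) := by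
        ext x; simp [Finset.mem_Icc]; omega
      rw [hins2, Finset.sum_insert (by simp)]
      rw [show u + 1 - 1 - u = 0 by omega, show u + 1 - u = 1 by omega, hr0, hr1]
      have hterm : ∑ t ∈ Finset.Icc (u+2) M,
            (2 * Real.cos α * (d t * r (t-1-u)) - d t * r (t-u))
          = ∑ t ∈ Finset.Icc (u+2) M, d t * r (t-(u+2)) := by
        apply Finset.sum_congr rfl
        intro t ht
        simp only [Finset.mem_Icc] at ht
        obtain ⟨v, rfl⟩ : ∃ v, t = v + (u+2) := ⟨t - (u+2), by omega⟩
        rw [show v + (u+2) - 1 - u = v + 1 by omega, show v + (u+2) - u = v + 2 by omega,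
            show v + (u+2) - (u+2) = v by omega]
        linear_combination (-(d (v+(u+2)))) * hrrec v
      rw [hterm]
      ring
    · rw [Finset.Icc_eq_empty (by omega), Finset.Icc_eq_empty (by omega)]
      simp
  rw [Finset.sum_sub_distrib] at key
  rw [Finset.mul_sum, show u+1+1 = u+2 from rfl]
  linarith [key]

private lemma pfun_diag (N M : ℕ) (d r : ℕ → ℝ) (α : ℝ) (hM1 : 1 ≤ M) (hM2 : 2 * M < N)
    (hr0 : r 0 = 1)
    (hrrec : ∀ t, r (t+2) + r t = 2 * Real.cos α * r (t+1))
    (hrdiff : ∀ t, r (t+2) - r t = 2 * Real.cos (α * ((t:ℝ)+2))) :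
    2 * Real.cos α * pfun N M d r 0 - 2 * pfun N M d r 1
      = ∑ j ∈ Finset.Icc 1 M, 2 * d j * Real.cos (α * (j : ℝ)) := by
  rw [pfun_val N M d r hM1 hM2 0 (by omega), pfun_val N M d r hM1 hM2 1 (by omega)]
  simp only [Nat.sub_zero, show (0:ℕ)+1 = 1 from rfl, show (1:ℕ)+1 = 2 from rfl,
    show ∀ t : ℕ, t - 1 - 1 = t - 2 from fun t => by omega]
  have hins : Finset.Icc 1 M = insert 1 (Finset.Icc 2 M) := by
    ext x; simp [Finset.mem_Icc]; omega
  rw [hins, Finset.sum_insert (by simp), Finset.sum_insert (by simp)]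
  rw [show (1:ℕ) - 1 = 0 from rfl, hr0]
  have key : ∑ t ∈ Finset.Icc 2 M, (2 * Real.cos α * (d t * r (t-1)) - 2 * (d t * r (t-2)))
      = ∑ t ∈ Finset.Icc 2 M, 2 * d t * Real.cos (α * (t:ℝ)) := by
    apply Finset.sum_congr rfl
    intro t ht
    simp only [Finset.mem_Icc] at ht
    obtain ⟨v, rfl⟩ : ∃ v, t = v + 2 := ⟨t - 2, by omega⟩
    rw [show v + 2 - 1 = v + 1 by omega, show v + 2 - 2 = v by omega]
    have h1 := hrdiff v
    have h2 := hrrec v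
    push_cast
    linear_combination (-(d (v+2))) * h2 + d (v+2) * h1
  rw [Finset.sum_sub_distrib] at key
  rw [mul_add, Finset.mul_sum, Finset.mul_sum, Nat.cast_one, mul_one α]
  linarith [key]

/-- The parametric generalized circulant graph Laplacian `L_α = d_α·I - A`, with
`d_α = ∑_{j=1}^M 2 d_j cos(αj)` and `A` the symmetric circulant adjacency matrix with
weights `d_j` at offsets `±j (mod N)`, factors as `L_α = L_{C,α} · P_α`, where
`L_{C,α} = 2cos(α)·I - A_C` and `P_α` is the symmetric circulant matrix built from the
sums `r_t = ∑_{m=0}^t cos(α(2m - t))`. -/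
theorem generalized_circulant_laplacian_decomposition
    (N M : ℕ) (hN : 3 ≤ N) (hM1 : 1 ≤ M) (hM2 : 2 * M < N)
    (d : ℕ → ℝ) (α : ℝ)
    (A AC Lα LCα P : Matrix (Fin N) (Fin N) ℝ)
    (r : ℕ → ℝ)
    (hr : ∀ t, r t = ∑ m ∈ Finset.range (t + 1), Real.cos (α * (2 * (m : ℝ) - (t : ℝ))))
    (hA : ∀ i j, A i j =
      if (j.val + N - i.val) % N ≠ 0 ∧ (j.val + N - i.val) % N ≤ M then
        d ((j.val + N - i.val) % N)
      else if (i.val + N - j.val) % N ≠ 0 ∧ (i.val + N - j.val) % N ≤ M then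
        d ((i.val + N - j.val) % N)
      else 0)
    (hAC : ∀ i j, AC i j =
      if j.val = (i.val + 1) % N ∨ i.val = (j.val + 1) % N then 1 else 0)
    (hLα : Lα = (∑ j ∈ Finset.Icc 1 M, 2 * d j * Real.cos (α * (j : ℝ))) •
      (1 : Matrix (Fin N) (Fin N) ℝ) - A)
    (hLCα : LCα = (2 * Real.cos α) • (1 : Matrix (Fin N) (Fin N) ℝ) - AC)
    (hP : ∀ i j, P i j =
      if i = j then ∑ t ∈ Finset.Icc 1 M, d t * r (t - 1)
      else if (j.val + N - i.val) % N ≤ M - 1 then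
        ∑ t ∈ Finset.Icc ((j.val + N - i.val) % N + 1) M,
          d t * r (t - 1 - (j.val + N - i.val) % N)
      else if (i.val + N - j.val) % N ≤ M - 1 then
        ∑ t ∈ Finset.Icc ((i.val + N - j.val) % N + 1) M,
          d t * r (t - 1 - (i.val + N - j.val) % N)
      else 0) :
    Lα = LCα * P := by
  have hN0 : 0 < N := by omega
  have hr0 := raux0 α r hr
  have hr1 := raux1 α r hr
  have hrrec := rauxrec α r hr
  have hrdiff := rauxdiff α r hr
  have hsplit : ∀ x : ℕ, x % N = 0 → x < 2*N → x = 0 ∨ x = N := by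
    intro x h hx
    obtain ⟨k, hk⟩ := Nat.dvd_of_mod_eq_zero h
    rcases k with _|_|k
    · omega
    · omega
    · have := Nat.mul_le_mul_left N (show 2 ≤ k+1+1 by omega); omega
  have hij : ∀ i j : Fin N, i = j ↔ (j.val + N - i.val) % N = 0 := by
    intro i j
    have hi := i.isLt; have hj := j.isLt
    constructor
    · rintro rfl
      rw [show i.val + N - i.val = N by omega, Nat.mod_self]
    · intro h
      rcases hsplit _ h (by omega) with h' | h'
      · exact absurd h' (by omega)
      · exact Fin.ext (by omega)
  have hs' : ∀ i j : Fin N, (j.val + N - i.val) % N ≠ 0 →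
      (i.val + N - j.val) % N = N - (j.val + N - i.val) % N := by
    intro i j h
    have hi := i.isLt; have hj := j.isLt
    have h1 : ((j.val + N - i.val) + (i.val + N - j.val)) % N = 0 := by
      rw [show (j.val + N - i.val) + (i.val + N - j.val) = 2*N by omega]
      simp [Nat.mul_mod_right, Nat.mul_mod_left]
    rw [Nat.add_mod] at h1
    have h2 := Nat.mod_lt (j.val + N - i.val) hN0
    have h3 := Nat.mod_lt (i.val + N - j.val) hN0
    rcases hsplit _ h1 (by omega) with h' | h' <;> omega
  have hPs : ∀ i j : Fin N, P i j = pfun N M d r ((j.val + N - i.val) % N) := by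
    intro i j
    rw [hP]
    unfold pfun
    by_cases h0 : i = j
    · rw [if_pos h0, if_pos ((hij i j).mp h0)]
    · have hs0 : (j.val + N - i.val) % N ≠ 0 := fun h => h0 ((hij i j).mpr h)
      rw [if_neg h0, hs' i j hs0, if_neg hs0]
  have hk2iff : ∀ a b : ℕ, a < N → b < N → (a = (b+1) % N ↔ b = (a+N-1) % N) := by
    intro a b ha hb
    have h1 : (b+1) % N = if b+1 = N then 0 else b+1 := by
      split_ifs with h
      · rw [h, Nat.mod_self]
      · exact Nat.mod_eq_of_lt (by omega)
    have h2 : (a+N-1) % N = if a = 0 then N-1 else a-1 := by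
      split_ifs with h
      · rw [h, show 0+N-1 = N-1 by omega]; exact Nat.mod_eq_of_lt (by omega)
      · rw [show a+N-1 = (a-1)+N by omega, Nat.add_mod_right]
        exact Nat.mod_eq_of_lt (by omega)
    rw [h1, h2]; split_ifs <;> omega
  ext i j
  have hi := i.isLt; have hj := j.isLt
  set s := (j.val + N - i.val) % N with hsdef
  have hslt : s < N := Nat.mod_lt _ hN0
  set K1 : Fin N := ⟨(i.val + 1) % N, Nat.mod_lt _ hN0⟩ with hK1
  set K2 : Fin N := ⟨(i.val + N - 1) % N, Nat.mod_lt _ hN0⟩ with hK2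
  have hK12 : K1 ≠ K2 := by
    have h1 : (i.val+1) % N = if i.val+1 = N then 0 else i.val+1 := by
      split_ifs with h
      · rw [h, Nat.mod_self]
      · exact Nat.mod_eq_of_lt (by omega)
    have h2 : (i.val+N-1) % N = if i.val = 0 then N-1 else i.val-1 := by
      split_ifs with h
      · rw [h, show 0+N-1 = N-1 by omega]; exact Nat.mod_eq_of_lt (by omega)
      · rw [show i.val+N-1 = (i.val-1)+N by omega, Nat.add_mod_right]
        exact Nat.mod_eq_of_lt (by omega)
    intro h
    have := congrArg Fin.val h
    simp only [hK1, hK2] at this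
    rw [h1, h2] at this
    split_ifs at this <;> omega
  have hfil : Finset.univ.filter
      (fun k : Fin N => k.val = (i.val + 1) % N ∨ i.val = (k.val + 1) % N)
      = ({K1, K2} : Finset (Fin N)) := by
    ext k
    have hk := k.isLt
    simp only [Finset.mem_filter, Finset.mem_univ, true_and, Finset.mem_insert,
      Finset.mem_singleton]
    constructor
    · rintro (h | h)
      · left; exact Fin.ext h
      · right; exact Fin.ext ((hk2iff i.val k.val hi hk).mp h)
    · rintro (rfl | rfl)
      · left; rfl
      · right; exact (hk2iff i.val ((i.val + N - 1) % N) hi (Nat.mod_lt _ hN0)).mpr rfl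
  have hprod : (LCα * P) i j = 2 * Real.cos α * P i j - P K1 j - P K2 j := by
    rw [Matrix.mul_apply, hLCα]
    have : ∀ k : Fin N, ((2 * Real.cos α) • (1 : Matrix (Fin N) (Fin N) ℝ) - AC) i k * P k j
        = (if i = k then 2 * Real.cos α * P k j else 0)
          - (if k.val = (i.val + 1) % N ∨ i.val = (k.val + 1) % N then P k j else 0) := by
      intro k
      rw [Matrix.sub_apply, Matrix.smul_apply, Matrix.one_apply, hAC, smul_eq_mul]
      split_ifs <;> ring
    rw [Finset.sum_congr rfl (fun k _ => this k), Finset.sum_sub_distrib]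
    rw [Finset.sum_ite_eq Finset.univ i (fun k => 2 * Real.cos α * P k j)]
    rw [← Finset.sum_filter, hfil, Finset.sum_pair hK12]
    simp only [Finset.mem_univ, if_true]
    ring
  have E1 : (j.val + N - K1.val) % N = (s + N - 1) % N := by
    have hrw : (s + N - 1) % N = ((j.val + N - i.val) + (N-1)) % N := by
      rw [show s + N - 1 = s + (N-1) by omega, hsdef]
      conv_rhs => rw [Nat.add_mod]
      rw [Nat.add_mod (((j.val + N - i.val)) % N) (N-1),
        Nat.mod_mod_of_dvd (j.val + N - i.val) dvd_rfl]
    rw [hrw]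
    simp only [hK1]
    rcases eq_or_lt_of_le (show i.val + 1 ≤ N by omega) with h | h
    · rw [show (i.val+1) % N = 0 by rw [h, Nat.mod_self]]
      congr 1
      omega
    · rw [Nat.mod_eq_of_lt h,
        show (j.val + N - i.val) + (N-1) = (j.val + N - (i.val+1)) + N by omega,
        Nat.add_mod_right]
  have E2 : (j.val + N - K2.val) % N = (s + 1) % N := by
    have hrw : (s + 1) % N = ((j.val + N - i.val) + 1) % N := by
      rw [hsdef]
      conv_rhs => rw [Nat.add_mod]
      rw [Nat.add_mod (((j.val + N - i.val)) % N) 1,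
        Nat.mod_mod_of_dvd (j.val + N - i.val) dvd_rfl]
    rw [hrw]
    simp only [hK2]
    rcases Nat.eq_zero_or_pos i.val with h | h
    · rw [show (i.val+N-1) % N = N-1 by
        rw [h, show 0+N-1 = N-1 by omega]; exact Nat.mod_eq_of_lt (by omega)]
      rw [show (j.val + N - i.val) + 1 = (j.val + N - (N-1)) + N by omega,
        Nat.add_mod_right]
    · rw [show (i.val+N-1) % N = i.val - 1 by
        rw [show i.val+N-1 = (i.val-1)+N by omega, Nat.add_mod_right]
        exact Nat.mod_eq_of_lt (by omega)]
      congr 1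
      omega
  rw [hprod, hPs i j, hPs K1 j, hPs K2 j, E1, E2, ← hsdef]
  rw [hLα, Matrix.sub_apply, Matrix.smul_apply, Matrix.one_apply, smul_eq_mul, hA,
    if_congr (hij i j) rfl rfl, ← hsdef]
  by_cases hc0 : s = 0
  · -- diagonal
    have hs'0 : (i.val + N - j.val) % N = 0 := by
      have : i = j := (hij i j).mpr hc0
      exact (hij j i).mp this.symm
    rw [if_pos hc0, if_neg (by simp [hc0]), if_neg (by simp [hs'0]), hc0]
    rw [show (0 + N - 1) % N = N - 1 by
      rw [show 0+N-1 = N-1 by omega]; exact Nat.mod_eq_of_lt (by omega)]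
    rw [show (0 + 1) % N = 1 by exact Nat.mod_eq_of_lt (by omega)]
    have hsym1 : pfun N M d r (N - 1) = pfun N M d r 1 :=
      pfun_symm N M d r hN hM1 hM2 1 (by omega) (by omega)
    rw [hsym1]
    have hd := pfun_diag N M d r α hM1 hM2 hr0 hrrec hrdiff
    linarith [hd]
  · rw [if_neg hc0, mul_zero]
    have hs'v := hs' i j hc0
    by_cases hc1 : s ≤ M
    · -- near band, lower side
      rw [if_pos ⟨hc0, hc1⟩]
      rw [show (s + N - 1) % N = s - 1 by
        rw [show s + N - 1 = (s-1) + N by omega, Nat.add_mod_right]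
        exact Nat.mod_eq_of_lt (by omega)]
      rw [show (s + 1) % N = s + 1 from Nat.mod_eq_of_lt (by omega)]
      have := pfun_mid N M d r α hM1 hM2 hr0 hr1 hrrec s (by omega) hc1
      linarith [this]
    · by_cases hc2 : s < N - M
      · -- dead zone
        rw [if_neg (by omega), if_neg (by rw [hs'v]; omega)]
        rw [show (s + N - 1) % N = s - 1 by
          rw [show s + N - 1 = (s-1) + N by omega, Nat.add_mod_right]
          exact Nat.mod_eq_of_lt (by omega)]
        rw [show (s + 1) % N = s + 1 from Nat.mod_eq_of_lt (by omega)]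
        rw [pfun_zero_mid N M d r hM1 hM2 s (by omega) (by omega),
            pfun_zero_mid N M d r hM1 hM2 (s-1) (by omega) (by omega),
            pfun_zero_mid N M d r hM1 hM2 (s+1) (by omega) (by omega)]
        ring
      · -- upper side: N - M ≤ s ≤ N - 1
        have hu1 : 1 ≤ N - s := by omega
        have hu2 : N - s ≤ M := by omega
        rw [if_neg (by omega), if_pos (by rw [hs'v]; constructor <;> omega), hs'v]
        rw [show (s + N - 1) % N = s - 1 by
          rw [show s + N - 1 = (s-1) + N by omega, Nat.add_mod_right]
          exact Nat.mod_eq_of_lt (by omega)]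
        have hpm1 : pfun N M d r (s - 1) = pfun N M d r ((N - s) + 1) := by
          have h := pfun_symm N M d r hN hM1 hM2 ((N-s)+1) (by omega) (by omega)
          rw [show N - ((N-s)+1) = s - 1 by omega] at h
          exact h
        have hps : pfun N M d r s = pfun N M d r (N - s) := by
          have h := pfun_symm N M d r hN hM1 hM2 (N-s) (by omega) (by omega)
          rw [show N - (N - s) = s by omega] at h
          exact h
        have hpp1 : pfun N M d r ((s + 1) % N) = pfun N M d r ((N - s) - 1) := by
          rcases eq_or_lt_of_le (show s + 1 ≤ N by omega) with h | h
          · rw [show (s+1) % N = 0 by rw [h, Nat.mod_self],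
              show (N - s) - 1 = 0 by omega]
          · have h2 := pfun_symm N M d r hN hM1 hM2 ((N-s)-1) (by omega) (by omega)
            rw [show N - ((N-s)-1) = s + 1 by omega] at h2
            rw [Nat.mod_eq_of_lt h]
            exact h2
        rw [hpm1, hps, hpp1]
        have := pfun_mid N M d r α hM1 hM2 hr0 hr1 hrrec (N-s) hu1 hu2
        linarith [this]
end

section
/- Let N ≥ 3 and let L_{C,α}, P, E, M_C be N×N complex circulant matrices such that: P is invertible; E is Hermitian with L_{C,α}·E = E·L_{C,α} = 0; and L_{C,α}·M_C = M_C·L_{C,α} = I_N − (1/N)·E with M_C·E = E·M_C = 0. Set L_α := L_{C,α}·P. Then the matrix M := M_C·P^{−1} satisfies the four Penrose equations for L_α (with respect to the conjugate transpose): L_α·M·L_α = L_α, M·L_α·M = M, (L_α·M)* = L_α·M, and (M·L_α)* = M·L_α; moreover L_α·M = M·L_α = I_N − (1/N)·E. In other words, when the circulant factor P = P_α is invertible, the Moore–Penrose pseudoinverse of the generalized circulant graph Laplacian L_α = L_{C,α}·P_α factors as L_α† = L_{C,α}†·P_α^{−1}. -/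
open Matrix

/-- Let `L_{C,α}`, `P`, `E`, `M_C` be complex circulant matrices with `P` invertible,
`E` Hermitian, `L_{C,α}·E = E·L_{C,α} = 0`, `L_{C,α}·M_C = M_C·L_{C,α} = I - (1/N)·E`
and `M_C·E = E·M_C = 0`. Then for `L_α := L_{C,α}·P`, the matrix `M := M_C·P⁻¹`
satisfies the four Penrose equations for `L_α`, and moreover
`L_α·M = M·L_α = I - (1/N)·E`: the Moore–Penrose pseudoinverse of the generalized
circulant Laplacian factors as `L_α† = L_{C,α}†·P_α⁻¹`. -/
theorem generalized_circulant_pseudoinverse_factorization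
    (N : ℕ) (hN : 3 ≤ N)
    (vL vP vE vM : Fin N → ℂ)
    (LCα P E MC : Matrix (Fin N) (Fin N) ℂ)
    (hLcirc : LCα = Matrix.circulant vL)
    (hPcirc : P = Matrix.circulant vP)
    (hEcirc : E = Matrix.circulant vE)
    (hMcirc : MC = Matrix.circulant vM)
    (hPunit : IsUnit P.det)
    (hEherm : Eᴴ = E)
    (hLE : LCα * E = 0) (hEL : E * LCα = 0)
    (hLM : LCα * MC = 1 - ((N : ℂ))⁻¹ • E)
    (hML : MC * LCα = 1 - ((N : ℂ))⁻¹ • E)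
    (hME : MC * E = 0) (hEM : E * MC = 0) :
    (LCα * P) * (MC * P⁻¹) * (LCα * P) = LCα * P ∧
    (MC * P⁻¹) * (LCα * P) * (MC * P⁻¹) = MC * P⁻¹ ∧
    ((LCα * P) * (MC * P⁻¹))ᴴ = (LCα * P) * (MC * P⁻¹) ∧
    ((MC * P⁻¹) * (LCα * P))ᴴ = (MC * P⁻¹) * (LCα * P) ∧
    (LCα * P) * (MC * P⁻¹) = 1 - ((N : ℂ))⁻¹ • E ∧
    (MC * P⁻¹) * (LCα * P) = 1 - ((N : ℂ))⁻¹ • E := by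
  have hPinv : P * P⁻¹ = 1 := Matrix.mul_nonsing_inv P hPunit
  have hinvP : P⁻¹ * P = 1 := Matrix.nonsing_inv_mul P hPunit
  have hPM : P * MC = MC * P := by
    rw [hPcirc, hMcirc, Matrix.Fin.circulant_mul_comm]
  have hPL : P * LCα = LCα * P := by
    rw [hPcirc, hLcirc, Matrix.Fin.circulant_mul_comm]
  -- P⁻¹ commutes with MC and LCα
  have comm : ∀ X : Matrix (Fin N) (Fin N) ℂ, P * X = X * P → X * P⁻¹ = P⁻¹ * X := by
    intro X h
    calc X * P⁻¹ = P⁻¹ * (P * X) * P⁻¹ := by rw [← Matrix.mul_assoc, hinvP, Matrix.one_mul]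
      _ = P⁻¹ * X * (P * P⁻¹) := by rw [h]; simp [Matrix.mul_assoc]
      _ = P⁻¹ * X := by rw [hPinv, Matrix.mul_one]
  have hMPinv : MC * P⁻¹ = P⁻¹ * MC := comm MC hPM
  have hLPinv : LCα * P⁻¹ = P⁻¹ * LCα := comm LCα hPL
  have key1 : (LCα * P) * (MC * P⁻¹) = 1 - ((N : ℂ))⁻¹ • E := by
    calc (LCα * P) * (MC * P⁻¹) = LCα * (P * MC) * P⁻¹ := by
          simp [Matrix.mul_assoc]
      _ = LCα * MC * (P * P⁻¹) := by rw [hPM]; simp [Matrix.mul_assoc]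
      _ = 1 - ((N : ℂ))⁻¹ • E := by rw [hPinv, Matrix.mul_one, hLM]
  have key2 : (MC * P⁻¹) * (LCα * P) = 1 - ((N : ℂ))⁻¹ • E := by
    calc (MC * P⁻¹) * (LCα * P) = MC * (P⁻¹ * LCα) * P := by
          simp [Matrix.mul_assoc]
      _ = MC * LCα * (P⁻¹ * P) := by rw [← hLPinv]; simp [Matrix.mul_assoc]
      _ = 1 - ((N : ℂ))⁻¹ • E := by rw [hinvP, Matrix.mul_one, hML]
  refine ⟨?_, ?_, ?_, ?_, key1, key2⟩
  · rw [key1, sub_mul, one_mul, Matrix.smul_mul, ← Matrix.mul_assoc, hEL,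
      Matrix.zero_mul, smul_zero, sub_zero]
  · rw [key2, sub_mul, one_mul, Matrix.smul_mul, ← Matrix.mul_assoc, hEM,
      Matrix.zero_mul, smul_zero, sub_zero]
  · rw [key1]; simp [Matrix.conjTranspose_sub, hEherm]
  · rw [key2]; simp [Matrix.conjTranspose_sub, hEherm]
end

section
/- Let N ≥ 3, let k be an integer with N ∤ 2k, and set α = 2πk/N. Let u ∈ ℂ^N be the vector with u_n = e^{iαn} and let ū be its entrywise complex conjugate. Let L be an N×N Hermitian complex matrix whose kernel is exactly span{u, ū}, let E := u·u* + ū·ū* (so E_{mn} = 2cos(α(m−n))), and let M be an N×N complex matrix with L·M = M·L = I_N − (1/N)·E. Then for every subset Λ ⊆ {0,…,N−1}, a vector x ∈ ℂ^N satisfies (L·x)_i = 0 for all i ∈ Λ if and only if x = z₁·u + z₂·ū + M·v for some z₁, z₂ ∈ ℂ and some v ∈ ℂ^N with v_i = 0 for all i ∈ Λ, ⟨u, v⟩ = 0 and ⟨ū, v⟩ = 0. -/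
open Matrix

/-- Let `α = 2πk/N` with `N ∤ 2k`, `u` the complex exponential vector `u n = e^{iαn}`,
`L` a Hermitian matrix whose kernel is exactly `span{u, conj u}`,
`E = u·u* + (conj u)·(conj u)*`, and `M` a matrix with `L·M = M·L = I - (1/N)·E`.
Then for every index subset `Λ`, a vector `x` satisfies `(L·x)_i = 0` for all `i ∈ Λ`
iff `x = z₁·u + z₂·conj u + M·v` for some scalars `z₁, z₂` and some `v` vanishing on
`Λ` with `⟨u, v⟩ = 0` and `⟨conj u, v⟩ = 0` (the Fredholm Alternative constraint). -/
theorem generalized_laplacian_analysis_subspace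
    (N : ℕ) (hN : 3 ≤ N) (k : ℤ) (hk : ¬ ((N : ℤ) ∣ 2 * k))
    (α : ℝ) (hα : α = 2 * Real.pi * (k : ℝ) / (N : ℝ))
    (u : Fin N → ℂ) (hu : ∀ n, u n = Complex.exp (Complex.I * (α : ℂ) * (n.val : ℂ)))
    (L E M : Matrix (Fin N) (Fin N) ℂ)
    (hLherm : Lᴴ = L)
    (hker : ∀ x : Fin N → ℂ, L.mulVec x = 0 ↔
      ∃ z₁ z₂ : ℂ, x = z₁ • u + z₂ • (fun n => starRingEnd ℂ (u n)))
    (hE : ∀ m n, E m n = u m * starRingEnd ℂ (u n) + starRingEnd ℂ (u m) * u n)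
    (hLM : L * M = 1 - ((N : ℂ))⁻¹ • E)
    (hML : M * L = 1 - ((N : ℂ))⁻¹ • E)
    (Λ : Finset (Fin N)) (x : Fin N → ℂ) :
    (∀ i ∈ Λ, L.mulVec x i = 0) ↔
      ∃ (z₁ z₂ : ℂ) (v : Fin N → ℂ),
        (∀ i ∈ Λ, v i = 0) ∧
        (∑ n, starRingEnd ℂ (u n) * v n = 0) ∧
        (∑ n, u n * v n = 0) ∧
        x = z₁ • u + z₂ • (fun n => starRingEnd ℂ (u n)) + M.mulVec v := by
  set ub : Fin N → ℂ := fun n => starRingEnd ℂ (u n) with hub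
  have hLu : L.mulVec u = 0 := (hker u).mpr ⟨1, 0, by simp⟩
  have hLub : L.mulVec ub = 0 := (hker ub).mpr ⟨0, 1, by simp⟩
  -- E acting on a vector
  have hEv : ∀ w : Fin N → ℂ, E.mulVec w =
      fun n => u n * (∑ m, ub m * w m) + ub n * (∑ m, u m * w m) := by
    intro w
    funext n
    simp only [Matrix.mulVec, dotProduct, hE, hub, Finset.mul_sum,
      ← Finset.sum_add_distrib]
    congr 1; funext m; ring
  -- star u ⬝ (L x) = 0 for all x
  have key : ∀ (w y : Fin N → ℂ), L.mulVec w = 0 → ∑ n, starRingEnd ℂ (w n) * (L.mulVec y) n = 0 := by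
    intro w y hw
    have h1 : (fun n => starRingEnd ℂ (w n)) = star w := rfl
    have h2 : ∑ n, starRingEnd ℂ (w n) * (L.mulVec y) n = (star w) ⬝ᵥ (L.mulVec y) := rfl
    rw [h2, Matrix.dotProduct_mulVec]
    have h3 : (star w) ᵥ* L = star (Lᴴ.mulVec w) := by
      rw [Matrix.star_mulVec, Matrix.conjTranspose_conjTranspose]
    rw [hLherm] at h3
    rw [h3, hw]
    simp
  constructor
  · intro hx
    refine ⟨(N : ℂ)⁻¹ * ∑ m, ub m * x m, (N : ℂ)⁻¹ * ∑ m, u m * x m, L.mulVec x,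
      hx, key u x hLu, ?_, ?_⟩
    · have := key ub x hLub
      simpa [hub, Complex.conj_conj] using this
    · have hMLx : M.mulVec (L.mulVec x) = x - (N : ℂ)⁻¹ • E.mulVec x := by
        rw [Matrix.mulVec_mulVec, hML, Matrix.sub_mulVec, Matrix.smul_mulVec,
          Matrix.one_mulVec]
      rw [hMLx, hEv x]
      funext n
      simp only [Pi.add_apply, Pi.sub_apply, Pi.smul_apply, smul_eq_mul]
      ring
  · rintro ⟨z₁, z₂, v, hvΛ, hv1, hv2, rfl⟩
    intro i hi
    have hLMv : L.mulVec (M.mulVec v) = v := by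
      rw [Matrix.mulVec_mulVec, hLM, Matrix.sub_mulVec, Matrix.smul_mulVec,
        Matrix.one_mulVec, hEv v, hv1, hv2]
      funext n; simp
    have : L.mulVec (z₁ • u + z₂ • ub + M.mulVec v) =
        z₁ • L.mulVec u + z₂ • L.mulVec ub + v := by
      rw [Matrix.mulVec_add, Matrix.mulVec_add, Matrix.mulVec_smul, Matrix.mulVec_smul, hLMv]
    rw [this, hLu, hLub]
    simp [hvΛ i hi]
end

section
/- Let N ≥ 2, let L be an N×N real symmetric matrix whose kernel is exactly the span of the all-ones vector 1_N, and let k be an integer with 1 ≤ k ≤ N−1. For a subset Λ ⊆ {0,…,N−1} write W_Λ = {x ∈ ℝ^N : (L·x)_i = 0 for all i ∈ Λ}. Then for any two subsets Λ₁, Λ₂ with |Λ₁| = |Λ₂| = N − k, the subspace sum W_{Λ₁} + W_{Λ₂} has dimension at most 2k − 1. -/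
open Matrix

private lemma mem_V_iff {N : ℕ} (Λ : Finset (Fin N)) (x : Fin N → ℝ) :
    x ∈ (⨅ i ∈ Λ, LinearMap.ker (LinearMap.proj i : (Fin N → ℝ) →ₗ[ℝ] ℝ)) ↔
      ∀ i ∈ Λ, x i = 0 := by
  simp [Submodule.mem_iInf, LinearMap.mem_ker]

private lemma finrank_V {N : ℕ} (Λ : Finset (Fin N)) :
    Module.finrank ℝ
      ↥(⨅ i ∈ Λ, LinearMap.ker (LinearMap.proj i : (Fin N → ℝ) →ₗ[ℝ] ℝ)) = N - Λ.card := by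
  set f : (Fin N → ℝ) →ₗ[ℝ] (↥Λ → ℝ) :=
    LinearMap.funLeft ℝ ℝ (fun i : ↥Λ => (i : Fin N)) with hf
  have hkerf : LinearMap.ker f =
      ⨅ i ∈ Λ, LinearMap.ker (LinearMap.proj i : (Fin N → ℝ) →ₗ[ℝ] ℝ) := by
    ext x
    rw [mem_V_iff]
    simp [hf, LinearMap.mem_ker, LinearMap.funLeft_apply, funext_iff, Subtype.forall,
      Function.comp]
  have hsurj : Function.Surjective f :=
    LinearMap.funLeft_surjective_of_injective ℝ ℝ _ Subtype.val_injective
  have hrn := LinearMap.finrank_range_add_finrank_ker f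
  rw [LinearMap.range_eq_top.mpr hsurj, finrank_top, hkerf] at hrn
  have h1 : Module.finrank ℝ (↥Λ → ℝ) = Λ.card := by
    simp [Module.finrank_pi]
  have h2 : Module.finrank ℝ (Fin N → ℝ) = N := by simp
  have hcard : Λ.card ≤ N := by
    simpa using Finset.card_le_card (Finset.subset_univ Λ)
  omega

private lemma finrank_W_le {N : ℕ} (hN : 2 ≤ N)
    (L : Matrix (Fin N) (Fin N) ℝ) (hLsymm : L.IsSymm)
    (hker : ∀ x : Fin N → ℝ, L.mulVec x = 0 ↔ ∃ z : ℝ, x = fun _ => z)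
    (k : ℕ) (hk1 : 1 ≤ k) (hk2 : k ≤ N - 1)
    (Λ : Finset (Fin N)) (hΛ : Λ.card = N - k) :
    Module.finrank ℝ
      ↥(⨅ i ∈ Λ, LinearMap.ker
          ((LinearMap.proj i : (Fin N → ℝ) →ₗ[ℝ] ℝ) ∘ₗ L.mulVecLin)) ≤ k := by
  set W : Submodule ℝ (Fin N → ℝ) :=
    ⨅ i ∈ Λ, LinearMap.ker
      ((LinearMap.proj i : (Fin N → ℝ) →ₗ[ℝ] ℝ) ∘ₗ L.mulVecLin) with hW
  have hWmem : ∀ x : Fin N → ℝ, x ∈ W ↔ ∀ i ∈ Λ, L.mulVec x i = 0 := by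
    intro x
    simp [hW, Submodule.mem_iInf, LinearMap.mem_ker]
  -- the sum functional
  set σ : (Fin N → ℝ) →ₗ[ℝ] ℝ := ∑ i : Fin N, LinearMap.proj i with hσ
  have hσapp : ∀ x : Fin N → ℝ, σ x = ∑ i, x i := by
    intro x; simp [hσ]
  -- L applied to all-ones vector is 0
  have h1 : L.mulVec (fun _ => (1 : ℝ)) = 0 := (hker _).mpr ⟨1, rfl⟩
  have hcolsum : ∀ j, ∑ i, L i j = 0 := by
    intro j
    have : ∑ i, L j i = 0 := by
      have := congrFun h1 j
      simpa [Matrix.mulVec, dotProduct] using this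
    calc ∑ i, L i j = ∑ i, L j i := by
          refine Finset.sum_congr rfl fun i _ => ?_
          exact congrFun (congrFun hLsymm j) i
      _ = 0 := this
  have hσL : ∀ x : Fin N → ℝ, σ (L.mulVec x) = 0 := by
    intro x
    rw [hσapp]
    have : ∑ i, L.mulVec x i = ∑ j, (∑ i, L i j) * x j := by
      simp only [Matrix.mulVec, dotProduct]
      rw [Finset.sum_comm]
      refine Finset.sum_congr rfl fun j _ => ?_
      rw [Finset.sum_mul]
    rw [this]
    simp [hcolsum]
  -- kernel of L is the span of the all-ones vector, of dimension 1
  have hkerL : LinearMap.ker L.mulVecLin = Submodule.span ℝ {fun _ => (1 : ℝ)} := by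
    ext x
    rw [LinearMap.mem_ker, Matrix.mulVecLin_apply, hker, Submodule.mem_span_singleton]
    constructor
    · rintro ⟨z, rfl⟩
      exact ⟨z, by funext i; simp⟩
    · rintro ⟨a, rfl⟩
      exact ⟨a, by funext i; simp⟩
  have hones_ne : (fun _ => (1 : ℝ)) ≠ (0 : Fin N → ℝ) := by
    intro h
    have := congrFun h ⟨0, by omega⟩
    norm_num at this
  have hkerL1 : Module.finrank ℝ ↥(LinearMap.ker L.mulVecLin) = 1 := by
    rw [hkerL]; exact finrank_span_singleton hones_ne
  -- the coordinate subspace V and its hyperplane S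
  set V : Submodule ℝ (Fin N → ℝ) :=
    ⨅ i ∈ Λ, LinearMap.ker (LinearMap.proj i : (Fin N → ℝ) →ₗ[ℝ] ℝ) with hV
  set S : Submodule ℝ (Fin N → ℝ) := V ⊓ LinearMap.ker σ with hS
  have hVrank : Module.finrank ℝ ↥V = k := by
    rw [hV, finrank_V, hΛ]; omega
  -- there is an index outside Λ
  have hΛne : ∃ j : Fin N, j ∉ Λ := by
    by_contra h
    push_neg at h
    have : Λ = Finset.univ := Finset.eq_univ_iff_forall.mpr h
    rw [this, Finset.card_univ, Fintype.card_fin] at hΛ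
    omega
  obtain ⟨j, hj⟩ := hΛne
  have hSlt : S < V := by
    refine lt_of_le_of_ne inf_le_left fun h => ?_
    have hjV : Pi.single j (1 : ℝ) ∈ V := by
      rw [hV, mem_V_iff]
      intro i hi
      have hij : i ≠ j := by rintro rfl; exact hj hi
      exact Pi.single_eq_of_ne hij 1
    rw [← h, hS, Submodule.mem_inf] at hjV
    have := hjV.2
    rw [LinearMap.mem_ker, hσapp] at this
    simp [Finset.sum_pi_single'] at this
  have hSrank : Module.finrank ℝ ↥S < k := by
    have := Submodule.finrank_lt_finrank_of_lt hSlt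
    omega
  -- rank-nullity on the restriction of L to W
  set f : ↥W →ₗ[ℝ] (Fin N → ℝ) := L.mulVecLin.domRestrict W with hf
  have hrn := LinearMap.finrank_range_add_finrank_ker f
  have hrange : LinearMap.range f ≤ S := by
    rintro y ⟨⟨x, hx⟩, rfl⟩
    rw [hS, Submodule.mem_inf]
    constructor
    · rw [hV, mem_V_iff]
      intro i hi
      have := (hWmem x).mp hx i hi
      simpa [hf] using this
    · rw [LinearMap.mem_ker]
      exact (by simpa [hf] using hσL x)
  have hrange_le : Module.finrank ℝ ↥(LinearMap.range f) ≤ Module.finrank ℝ ↥S :=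
    Submodule.finrank_mono hrange
  have hkerf_le : Module.finrank ℝ ↥(LinearMap.ker f) ≤ 1 := by
    have hmap : (LinearMap.ker f).map W.subtype ≤ LinearMap.ker L.mulVecLin := by
      rintro x ⟨⟨y, hy⟩, hm, rfl⟩
      rw [SetLike.mem_coe, LinearMap.mem_ker] at hm
      rw [LinearMap.mem_ker]
      simpa [hf] using hm
    have := Submodule.finrank_mono hmap
    rwa [Submodule.finrank_map_subtype_eq, hkerL1] at this
  have hWrank : Module.finrank ℝ ↥W =
      Module.finrank ℝ ↥(LinearMap.range f) + Module.finrank ℝ ↥(LinearMap.ker f) :=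
    hrn.symm
  omega

/-- For the graph Laplacian `L` of a connected graph (symmetric with kernel exactly the
span of the all-ones vector) and cosupports `Λ₁, Λ₂` of cardinality `N - k`
(`1 ≤ k ≤ N-1`), the sum of the cosparse analysis subspaces
`W_Λ = {x : (L x)_i = 0 for i ∈ Λ}` has dimension at most `2k - 1`. -/
theorem analysis_subspace_sum_dim_bound
    (N : ℕ) (hN : 2 ≤ N)
    (L : Matrix (Fin N) (Fin N) ℝ)
    (hLsymm : L.IsSymm)
    (hker : ∀ x : Fin N → ℝ, L.mulVec x = 0 ↔ ∃ z : ℝ, x = fun _ => z)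
    (k : ℕ) (hk1 : 1 ≤ k) (hk2 : k ≤ N - 1)
    (Λ₁ Λ₂ : Finset (Fin N)) (hΛ₁ : Λ₁.card = N - k) (hΛ₂ : Λ₂.card = N - k) :
    Module.finrank ℝ
      ↥((⨅ i ∈ Λ₁, LinearMap.ker
            ((LinearMap.proj i : (Fin N → ℝ) →ₗ[ℝ] ℝ) ∘ₗ L.mulVecLin)) ⊔
        (⨅ i ∈ Λ₂, LinearMap.ker
            ((LinearMap.proj i : (Fin N → ℝ) →ₗ[ℝ] ℝ) ∘ₗ L.mulVecLin))) ≤ 2 * k - 1 := by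
  set W₁ : Submodule ℝ (Fin N → ℝ) :=
    ⨅ i ∈ Λ₁, LinearMap.ker
      ((LinearMap.proj i : (Fin N → ℝ) →ₗ[ℝ] ℝ) ∘ₗ L.mulVecLin) with hW₁
  set W₂ : Submodule ℝ (Fin N → ℝ) :=
    ⨅ i ∈ Λ₂, LinearMap.ker
      ((LinearMap.proj i : (Fin N → ℝ) →ₗ[ℝ] ℝ) ∘ₗ L.mulVecLin) with hW₂
  have hb₁ : Module.finrank ℝ ↥W₁ ≤ k := finrank_W_le hN L hLsymm hker k hk1 hk2 Λ₁ hΛ₁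
  have hb₂ : Module.finrank ℝ ↥W₂ ≤ k := finrank_W_le hN L hLsymm hker k hk1 hk2 Λ₂ hΛ₂
  have h1 : L.mulVec (fun _ => (1 : ℝ)) = 0 := (hker _).mpr ⟨1, rfl⟩
  have hmem : ∀ (Λ : Finset (Fin N)), (fun _ => (1 : ℝ)) ∈
      (⨅ i ∈ Λ, LinearMap.ker
        ((LinearMap.proj i : (Fin N → ℝ) →ₗ[ℝ] ℝ) ∘ₗ L.mulVecLin)) := by
    intro Λ
    simp only [Submodule.mem_iInf, LinearMap.mem_ker, LinearMap.coe_comp,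
      Function.comp_apply, Matrix.mulVecLin_apply, LinearMap.proj_apply]
    intro i _
    rw [h1]; rfl
  have hinf : 1 ≤ Module.finrank ℝ ↥(W₁ ⊓ W₂) := by
    by_contra h
    push_neg at h
    have h0 : Module.finrank ℝ ↥(W₁ ⊓ W₂) = 0 := by omega
    rw [Submodule.finrank_eq_zero] at h0
    have : (fun _ => (1 : ℝ)) ∈ W₁ ⊓ W₂ := ⟨hmem Λ₁, hmem Λ₂⟩
    rw [h0, Submodule.mem_bot] at this
    have := congrFun this ⟨0, by omega⟩
    norm_num at this
  have hsum := Submodule.finrank_sup_add_finrank_inf_eq W₁ W₂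
  omega
end
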